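/- arXiv:1510.00945 — 12 statements merged into one kernel-verified Lean document; each statement's English description precedes it below -/
import Mathlib

section
/- Let G be a finite simple graph on n vertices. If ∑_{v ∈ V(G)} C(deg(v), 2) > C(n, 2) (binomial coefficients), then G contains a cycle of length 4, i.e., there exist four pairwise distinct vertices a, b, c, d such that ab, bc, cd and da are all edges of G. -/
theorem sum_choose_two_gt_implies_four_cycle
    {V : Type*} [Fintype V] (G : SimpleGraph V) [DecidableRel G.Adj]
    (h : (Fintype.card V).choose 2 < ∑ v : V, (G.degree v).choose 2) :
    ∃ a b c d : V, a ≠ b ∧ a ≠ c ∧ a ≠ d ∧ b ≠ c ∧ b ≠ d ∧ c ≠ d ∧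
      G.Adj a b ∧ G.Adj b c ∧ G.Adj c d ∧ G.Adj d a := by
  classical
  set s : Finset (Σ _ : V, Finset V) :=
    Finset.univ.sigma (fun v => (G.neighborFinset v).powersetCard 2) with hs
  set t : Finset (Finset V) := (Finset.univ : Finset V).powersetCard 2 with ht
  have hscard : s.card = ∑ v : V, (G.degree v).choose 2 := by
    rw [hs, Finset.card_sigma]
    refine Finset.sum_congr rfl fun v _ => ?_
    rw [Finset.card_powersetCard, G.card_neighborFinset_eq_degree]
  have htcard : t.card = (Fintype.card V).choose 2 := by
    rw [ht, Finset.card_powersetCard, Finset.card_univ]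
  have hmap : ∀ x ∈ s, x.2 ∈ t := by
    rintro ⟨v, p⟩ hx
    rw [hs, Finset.mem_sigma] at hx
    rw [ht, Finset.mem_powersetCard]
    exact ⟨Finset.subset_univ _, (Finset.mem_powersetCard.mp hx.2).2⟩
  have := Finset.exists_ne_map_eq_of_card_lt_of_maps_to
    (htcard ▸ hscard ▸ h) hmap
  obtain ⟨⟨v, p⟩, hv, ⟨w, q⟩, hw, hne, heq⟩ := this
  simp only at heq
  subst heq
  have hvw : v ≠ w := fun hvw => hne (by simp [hvw])
  rw [hs, Finset.mem_sigma, Finset.mem_powersetCard] at hv hw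
  obtain ⟨x, y, hxy, hp⟩ := Finset.card_eq_two.mp hv.2.2
  subst hp
  have hxv : G.Adj v x := by
    have := hv.2.1 (Finset.mem_insert_self x {y})
    rwa [SimpleGraph.mem_neighborFinset] at this
  have hyv : G.Adj v y := by
    have := hv.2.1 (Finset.mem_insert_of_mem (Finset.mem_singleton_self y))
    rwa [SimpleGraph.mem_neighborFinset] at this
  have hxw : G.Adj w x := by
    have := hw.2.1 (Finset.mem_insert_self x {y})
    rwa [SimpleGraph.mem_neighborFinset] at this
  have hyw : G.Adj w y := by
    have := hw.2.1 (Finset.mem_insert_of_mem (Finset.mem_singleton_self y))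
    rwa [SimpleGraph.mem_neighborFinset] at this
  exact ⟨x, v, y, w, hxv.symm.ne, hxy, hxw.symm.ne, hyv.ne, hvw, hyw.ne',
    hxv.symm, hyv, hyw.symm, hxw⟩
end

section
/- Let G be a finite simple graph with n vertices and m edges. If G contains no cycle of length 4 (there are no four pairwise distinct vertices a, b, c, d such that ab, bc, cd and da are all edges of G), then m ≤ (n/4)·(1 + √(4n − 3)), where the inequality is between real numbers. -/
open Finset

theorem reiman_bound_of_no_four_cycle
    {V : Type*} [Fintype V] [DecidableEq V] (G : SimpleGraph V) [DecidableRel G.Adj]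
    (h : ¬ ∃ a b c d : V, a ≠ b ∧ a ≠ c ∧ a ≠ d ∧ b ≠ c ∧ b ≠ d ∧ c ≠ d ∧
      G.Adj a b ∧ G.Adj b c ∧ G.Adj c d ∧ G.Adj d a) :
    (G.edgeFinset.card : ℝ) ≤
      (Fintype.card V : ℝ) / 4 * (1 + Real.sqrt (4 * (Fintype.card V : ℝ) - 3)) := by
  classical
  set n := Fintype.card V with hn
  set m := G.edgeFinset.card with hm
  -- key counting lemma: ∑_v |offDiag of N(v)| ≤ n² - n
  have key : ∑ v : V, ((G.neighborFinset v).offDiag).card ≤ n * n - n := by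
    have h1 : ∀ v : V, (G.neighborFinset v).offDiag =
        (univ : Finset V).offDiag.filter (fun p => G.Adj v p.1 ∧ G.Adj v p.2) := by
      intro v
      ext p
      simp only [Finset.mem_offDiag, Finset.mem_filter, SimpleGraph.mem_neighborFinset,
        Finset.mem_univ, true_and]
      tauto
    calc ∑ v : V, ((G.neighborFinset v).offDiag).card
        = ∑ v : V, ∑ p ∈ (univ : Finset V).offDiag,
            (if G.Adj v p.1 ∧ G.Adj v p.2 then 1 else 0) := by
          simp_rw [h1, Finset.card_filter]
      _ = ∑ p ∈ (univ : Finset V).offDiag, ∑ v : V,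
            (if G.Adj v p.1 ∧ G.Adj v p.2 then 1 else 0) := Finset.sum_comm
      _ ≤ ∑ p ∈ (univ : Finset V).offDiag, 1 := by
          apply Finset.sum_le_sum
          intro p hp
          rw [Finset.mem_offDiag] at hp
          rw [← Finset.card_filter]
          apply Finset.card_le_one.2
          intro x hx y hy
          simp only [Finset.mem_filter] at hx hy
          by_contra hxy
          exact h ⟨p.1, x, p.2, y, (G.ne_of_adj hx.2.1).symm, hp.2.2,
            (G.ne_of_adj hy.2.1).symm, G.ne_of_adj hx.2.2, hxy,
            (G.ne_of_adj hy.2.2).symm,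
            hx.2.1.symm, hx.2.2, hy.2.2.symm, hy.2.1⟩
      _ = n * n - n := by
          rw [Finset.sum_const, smul_eq_mul, mul_one, Finset.offDiag_card,
            Finset.card_univ]
  -- turn into degree sums
  have key2 : ∑ v : V, G.degree v * G.degree v ≤ ∑ v : V, G.degree v + (n * n - n) := by
    have : ∑ v : V, G.degree v * G.degree v ≤
        ∑ v : V, G.degree v + ∑ v : V, ((G.neighborFinset v).offDiag).card := by
      rw [← Finset.sum_add_distrib]
      apply Finset.sum_le_sum
      intro v _
      rw [Finset.offDiag_card, ← SimpleGraph.card_neighborFinset_eq_degree]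
      set d := (G.neighborFinset v).card
      have : d ≤ d * d := by nlinarith
      omega
    omega
  -- now real arithmetic
  have hd : ∑ v : V, G.degree v = 2 * m := G.sum_degrees_eq_twice_card_edges
  have hnn : n ≤ n * n := by nlinarith
  rcases Nat.eq_zero_or_pos n with h0 | hpos
  · have hV : IsEmpty V := Fintype.card_eq_zero_iff.mp h0
    have hme : G.edgeFinset = ∅ := Finset.eq_empty_of_isEmpty _
    rw [hm, hme]
    simp [← hn, h0]
  -- real arithmetic
  have hn1 : (1 : ℝ) ≤ n := by exact_mod_cast hpos
  have hm0 : (0 : ℝ) ≤ m := Nat.cast_nonneg m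
  have key3 : ∑ v : V, (G.degree v : ℝ) ^ 2 ≤ 2 * (m : ℝ) + ((n : ℝ) * n - n) := by
    calc ∑ v : V, (G.degree v : ℝ) ^ 2
        = ((∑ v : V, G.degree v * G.degree v : ℕ) : ℝ) := by push_cast [sq]; ring
      _ ≤ ((∑ v : V, G.degree v + (n * n - n) : ℕ) : ℝ) := Nat.cast_le.2 key2
      _ = 2 * (m : ℝ) + ((n : ℝ) * n - n) := by
          rw [hd]; push_cast [Nat.cast_sub hnn]; ring
  have hcs : (2 * (m : ℝ)) ^ 2 ≤ (n : ℝ) * ∑ v : V, (G.degree v : ℝ) ^ 2 := by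
    have hsum : ∑ v : V, (G.degree v : ℝ) = 2 * m := by exact_mod_cast hd
    have := sq_sum_le_card_mul_sum_sq (s := (univ : Finset V))
      (f := fun v => (G.degree v : ℝ))
    rw [hsum, Finset.card_univ, ← hn] at this
    exact this
  have hcomb : 4 * (m : ℝ) ^ 2 ≤ (n : ℝ) * (2 * m + ((n : ℝ) * n - n)) := by
    nlinarith [mul_le_mul_of_nonneg_left key3 (by linarith : (0:ℝ) ≤ (n:ℝ))]
  set s := Real.sqrt (4 * (n : ℝ) - 3) with hsdef
  have hs0 : 0 ≤ s := Real.sqrt_nonneg _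
  have hs : s ^ 2 = 4 * (n : ℝ) - 3 := Real.sq_sqrt (by linarith)
  have hs1 : 1 ≤ s := by nlinarith
  nlinarith [sq_nonneg (4 * (m : ℝ) - n - n * s), mul_nonneg (mul_nonneg (by linarith : (0:ℝ) ≤ (n:ℝ)) hs0) hs0, mul_le_mul_of_nonneg_left hs1 (by linarith : (0:ℝ) ≤ (n:ℝ))]
end

section
/- A finite simple graph G is bipartite if and only if its vertex–edge incidence matrix over ℚ (the matrix whose rows are indexed by vertices and columns by edges, with entry 1 when the vertex is an endpoint of the edge and 0 otherwise) is totally unimodular, i.e., every square submatrix has determinant equal to 0, 1 or −1. -/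
lemma fin_eq_add_one_iff {k : ℕ} (x y : Fin (k + 1)) :
    (y = x + 1) ↔ ((y : ℕ) = (x : ℕ) + 1 ∧ (x : ℕ) < k) ∨ ((y : ℕ) = 0 ∧ (x : ℕ) = k) := by
  rw [Fin.ext_iff, Fin.val_add_one]
  by_cases hl : x = Fin.last k
  · have : (x : ℕ) = k := by rw [hl]; rfl
    simp [hl, this]
  · have : (x : ℕ) ≠ k := fun hc => hl (Fin.ext hc)
    have hlt : (x : ℕ) < k := by have := x.isLt; omega
    simp [hl]
    omega

private lemma cyc_det (m : ℕ) (hm : 2 ≤ m) (hodd : Odd (m + 1)) :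
    (Matrix.of fun i j : Fin (m + 1) => if i = j ∨ j = i + 1 then (1 : ℚ) else 0).det = 2 := by
  have hme : Even m := by rw [Nat.even_iff]; rw [Nat.odd_iff] at hodd; omega
  have hadd1 : ∀ x y : Fin (m + 1), (y = x + 1) ↔ ((y : ℕ) = (x : ℕ) + 1 ∧ (x : ℕ) < m) ∨
      ((y : ℕ) = 0 ∧ (x : ℕ) = m) := fun x y => fin_eq_add_one_iff x y
  rw [Matrix.det_succ_column_zero]
  rw [Fintype.sum_eq_add (0 : Fin (m + 1)) (Fin.last m)
    (by
      intro h
      have := congrArg Fin.val h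
      simp at this
      omega)
    (by
      intro x ⟨hx0, hxl⟩
      have h1 : ¬ ((x = 0) ∨ (0 : Fin (m+1)) = x + 1) := by
        rintro (rfl | h)
        · exact hx0 rfl
        · rcases (hadd1 x 0).mp h with ⟨h1, _⟩ | ⟨_, h2⟩
          · simp at h1
          · exact hxl (Fin.ext h2)
      simp only [Matrix.of_apply, if_neg h1, mul_zero, zero_mul])]
  have e00 : (Matrix.of fun i j : Fin (m + 1) => if i = j ∨ j = i + 1 then (1 : ℚ) else 0) 0 0
      = 1 := by simp
  have el0 : (Matrix.of fun i j : Fin (m + 1) => if i = j ∨ j = i + 1 then (1 : ℚ) else 0)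
      (Fin.last m) 0 = 1 := by
    have : (0 : Fin (m+1)) = Fin.last m + 1 := by
      rw [hadd1]
      right
      exact ⟨rfl, rfl⟩
    rw [Matrix.of_apply, if_pos (Or.inr this)]
  rw [e00, el0]
  have hminor0 :
      ((Matrix.of fun i j : Fin (m + 1) => if i = j ∨ j = i + 1 then (1 : ℚ) else 0).submatrix
        (Fin.succAbove 0) Fin.succ).det = 1 := by
    rw [Matrix.det_of_upperTriangular]
    · rw [Finset.prod_eq_one]
      intro i _
      simp [Matrix.submatrix_apply]
    · intro i j hji
      simp only [id] at hji
      rw [Matrix.submatrix_apply, Fin.succAbove_zero, Matrix.of_apply, if_neg]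
      rintro (h | h)
      · exact absurd (Fin.succ_injective _ h) (Fin.ne_of_gt hji)
      · rcases (hadd1 _ _).mp h with ⟨h1, _⟩ | ⟨h1, _⟩
        · simp only [Fin.val_succ] at h1
          have : (j : ℕ) < (i : ℕ) := hji
          omega
        · simp at h1
  have hminorl :
      ((Matrix.of fun i j : Fin (m + 1) => if i = j ∨ j = i + 1 then (1 : ℚ) else 0).submatrix
        ((Fin.last m).succAbove) Fin.succ).det = 1 := by
    rw [Matrix.det_of_lowerTriangular]
    · rw [Finset.prod_eq_one]
      intro i _
      rw [Matrix.submatrix_apply, Fin.succAbove_last, Matrix.of_apply, if_pos]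
      right
      rw [hadd1]
      left
      refine ⟨by simp, by simp⟩
    · intro i j hij
      have hij' : (i : ℕ) < (j : ℕ) := hij
      rw [Matrix.submatrix_apply, Fin.succAbove_last, Matrix.of_apply, if_neg]
      rintro (h | h)
      · have := congrArg Fin.val h
        simp at this
        omega
      · rcases (hadd1 _ _).mp h with ⟨h1, _⟩ | ⟨h1, h2⟩
        · simp only [Fin.val_succ, Fin.coe_castSucc] at h1
          omega
        · simp only [Fin.coe_castSucc] at h2
          have := i.isLt
          omega
  rw [hminor0, hminorl]
  have : ((Fin.last m : Fin (m+1)) : ℕ) = m := rfl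
  rw [this]
  rw [hme.neg_one_pow]
  norm_num

open Finset in
lemma forward_aux {V : Type*} [Fintype V] [DecidableEq V] {G : SimpleGraph V}
    (c : G.Coloring Bool) :
    ∀ (k : ℕ) (f : Fin k → V) (g : Fin k → G.edgeSet),
      Function.Injective f → Function.Injective g →
        (Matrix.of fun i j : Fin k =>
            if f i ∈ (g j : Sym2 V) then (1 : ℚ) else 0).det ∈ ({0, 1, -1} : Set ℚ) := by
  intro k
  induction k with
  | zero => intro f g _ _; simp [Matrix.det_fin_zero]
  | succ n ih =>
    intro f g hf hg
    by_cases hcol : ∀ j : Fin (n+1), ∀ x ∈ (g j : Sym2 V), x ∈ Set.range f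
    · -- every edge has both endpoints in the row set: rows are linearly dependent
      left
      rw [← Matrix.exists_vecMul_eq_zero_iff]
      refine ⟨fun i => if c (f i) then 1 else -1, ?_, ?_⟩
      · intro h0
        have := congrFun h0 0
        simp only [Pi.zero_apply] at this
        by_cases hb : c (f 0) <;> simp [hb] at this
      · funext j
        obtain ⟨⟨a, b⟩, hab'⟩ := Quot.exists_rep (g j : Sym2 V)
        have hej : (g j : Sym2 V) = s(a, b) := hab'.symm
        have hadj : G.Adj a b := (SimpleGraph.mem_edgeSet G).mp (hej ▸ (g j).2)
        obtain ⟨i₁, hi₁⟩ := hcol j a (by rw [hej]; simp)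
        obtain ⟨i₂, hi₂⟩ := hcol j b (by rw [hej]; simp)
        have hne : i₁ ≠ i₂ := by
          rintro rfl; rw [hi₁] at hi₂; exact hadj.ne (hi₂ ▸ rfl)
        have key : ∀ i : Fin (n+1),
            (if c (f i) then (1:ℚ) else -1) * (if f i ∈ (g j : Sym2 V) then (1:ℚ) else 0)
            = if i ∈ ({i₁, i₂} : Finset (Fin (n+1))) then (if c (f i) then (1:ℚ) else -1) else 0 := by
          intro i
          have hmem : f i ∈ (g j : Sym2 V) ↔ i ∈ ({i₁, i₂} : Finset (Fin (n+1))) := by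
            rw [hej, Sym2.mem_iff, Finset.mem_insert, Finset.mem_singleton]
            constructor
            · rintro (h | h)
              · exact Or.inl (hf (h.trans hi₁.symm))
              · exact Or.inr (hf (h.trans hi₂.symm))
            · rintro (rfl | rfl)
              · exact Or.inl hi₁
              · exact Or.inr hi₂
          by_cases hi : i ∈ ({i₁, i₂} : Finset (Fin (n+1)))
          · rw [if_pos hi, if_pos (hmem.mpr hi), mul_one]
          · rw [if_neg hi, if_neg (fun h => hi (hmem.mp h)), mul_zero]
        simp only [Matrix.vecMul, dotProduct, Matrix.of_apply, Pi.zero_apply]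
        rw [Finset.sum_congr rfl (fun i _ => key i)]
        rw [Finset.sum_ite_mem, Finset.univ_inter, Finset.sum_pair hne]
        rw [hi₁, hi₂]
        have hcc : c a ≠ c b := c.valid hadj
        cases hca : c a <;> cases hcb : c b <;> simp_all
    · push_neg at hcol
      obtain ⟨j₀, b, hbe, hbf⟩ := hcol
      -- column j₀ has at most one nonzero entry
      obtain ⟨a, hab⟩ : ∃ a, (g j₀ : Sym2 V) = s(a, b) := by
        obtain ⟨⟨x, y⟩, hxy⟩ := Quot.exists_rep (g j₀ : Sym2 V)
        have hxy' : (g j₀ : Sym2 V) = s(x, y) := hxy.symm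
        rw [hxy', Sym2.mem_iff] at hbe
        rcases hbe with rfl | rfl
        · exact ⟨y, hxy'.trans Sym2.eq_swap⟩
        · exact ⟨x, hxy'⟩
      have hcolval : ∀ i, (if f i ∈ (g j₀ : Sym2 V) then (1:ℚ) else 0) = if f i = a then 1 else 0 := by
        intro i
        have hmem : f i ∈ (g j₀ : Sym2 V) ↔ f i = a := by
          rw [hab, Sym2.mem_iff]
          constructor
          · rintro (h | h)
            · exact h
            · exact absurd ⟨i, h⟩ hbf
          · exact Or.inl
        simp only [hmem]
      by_cases ha : ∃ i₀, f i₀ = a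
      · obtain ⟨i₀, hi₀⟩ := ha
        rw [Matrix.det_succ_column _ j₀]
        rw [Finset.sum_eq_single i₀]
        · have hsub : ((Matrix.of fun i j : Fin (n+1) =>
              if f i ∈ (g j : Sym2 V) then (1 : ℚ) else 0).submatrix i₀.succAbove j₀.succAbove)
              = Matrix.of fun i j : Fin n =>
                if (f ∘ i₀.succAbove) i ∈ ((g ∘ j₀.succAbove) j : Sym2 V) then (1 : ℚ) else 0 := rfl
          have hD := ih (f ∘ i₀.succAbove) (g ∘ j₀.succAbove)
            (hf.comp (Fin.succAbove_right_injective))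
            (hg.comp (Fin.succAbove_right_injective))
          rw [hsub]
          set D := (Matrix.of fun i j : Fin n =>
                if (f ∘ i₀.succAbove) i ∈ ((g ∘ j₀.succAbove) j : Sym2 V) then (1 : ℚ) else 0).det
          have hentry : (Matrix.of fun i j : Fin (n+1) =>
              if f i ∈ (g j : Sym2 V) then (1 : ℚ) else 0) i₀ j₀ = 1 := by
            simp only [Matrix.of_apply]
            rw [hcolval i₀]
            simp [hi₀]
          rw [hentry, mul_one]
          simp only [Set.mem_insert_iff, Set.mem_singleton_iff] at hD ⊢
          rcases Nat.even_or_odd ((i₀ : ℕ) + (j₀ : ℕ)) with hpar | hpar <;>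
            rw [hpar.neg_one_pow] <;>
            rcases hD with h | h | h <;> rw [h] <;> norm_num
        · intro i _ hi
          have : (Matrix.of fun i j : Fin (n+1) =>
              if f i ∈ (g j : Sym2 V) then (1 : ℚ) else 0) i j₀ = 0 := by
            simp only [Matrix.of_apply]
            rw [hcolval i]
            have : f i ≠ a := fun hh => hi (hf (hh.trans hi₀.symm))
            simp [this]
          rw [this]; ring
        · intro h; exact absurd (Finset.mem_univ i₀) h
      · left
        apply Matrix.det_eq_zero_of_column_eq_zero j₀
        intro i
        simp only [Matrix.of_apply]
        rw [hcolval i]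
        have : f i ≠ a := fun hh => ha ⟨i, hh⟩
        simp [this]


open SimpleGraph Walk in
lemma walk_split_dart {V : Type*} {G : SimpleGraph V} {x y : V} (q : G.Walk x y)
    (d : G.Dart) (hd : d ∈ q.darts) :
    ∃ (a : G.Walk x d.fst) (b : G.Walk d.snd y), a.length + 1 + b.length = q.length := by
  induction q with
  | nil => simp at hd
  | cons h r ih =>
    rw [Walk.darts_cons, List.mem_cons] at hd
    rcases hd with rfl | hd
    · exact ⟨Walk.nil, r, by simp [Nat.add_comm]⟩
    · obtain ⟨a, b, hab⟩ := ih hd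
      exact ⟨Walk.cons h a, b, by simp [Walk.length_cons, ← hab]; ring⟩

open SimpleGraph Walk in
lemma closed_split {V : Type*} [DecidableEq V] {G : SimpleGraph V} {w : V} (c : G.Walk w w)
    (h2 : 2 ≤ c.support.tail.count w) :
    ∃ (c1 c2 : G.Walk w w), c1.length + c2.length = c.length ∧
      0 < c1.length ∧ 0 < c2.length := by
  cases c with
  | nil => simp at h2
  | @cons _ x _ h q =>
    rw [Walk.support_cons, List.tail_cons] at h2
    have hw : w ∈ q.support := List.count_pos_iff.mp (by omega)
    set t := q.takeUntil w hw with ht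
    set d := q.dropUntil w hw with hd
    have hspec : t.append d = q := q.take_spec hw
    have hcount1 : t.support.count w = 1 := q.count_support_takeUntil_eq_one hw
    have hsupct : q.support.count w = t.support.count w + d.support.tail.count w := by
      rw [← hspec, Walk.support_append, List.count_append]
    have hdne : d.support.tail ≠ [] := by
      intro hnil
      rw [hsupct, hnil] at h2
      simp [hcount1] at h2
    have hdlen : 0 < d.length := by
      have h1 := d.length_support
      cases hh : d.support.tail with
      | nil => exact absurd hh hdne
      | cons a l =>
        have : d.support = w :: d.support.tail := d.support_eq_cons
        rw [hh] at this
        rw [this] at h1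
        simp at h1
        omega
    refine ⟨Walk.cons h t, d, ?_, by simp, hdlen⟩
    have := congrArg Walk.length hspec
    rw [Walk.length_append] at this
    simp [Walk.length_cons]
    omega

open SimpleGraph Walk in
lemma exists_odd_cycle {V : Type*} [DecidableEq V] {G : SimpleGraph V} :
    ∀ (n : ℕ) {u : V} (p : G.Walk u u), p.length = n → Odd n →
      ∃ (w : V) (c : G.Walk w w), c.IsCycle ∧ Odd c.length := by
  intro n
  induction n using Nat.strong_induction_on with
  | _ n ih =>
  intro u p hn hodd
  by_cases hC : p.IsCycle
  · exact ⟨u, p, hC, hn ▸ hodd⟩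
  have hn0 : n ≠ 0 := by rintro rfl; simp at hodd
  by_cases hT : p.support.tail.Nodup
  · -- tail is nodup, so edges must repeat: the first edge appears again
    cases p with
    | nil => exact absurd hn.symm hn0
    | @cons _ x _ h q =>
      rw [Walk.support_cons, List.tail_cons] at hT
      have hq : q.IsPath := Walk.IsPath.mk' hT
      have hnotTrail : ¬ (Walk.cons h q).IsTrail := by
        intro htr
        exact hC ((Walk.cons h q).isCycle_def.mpr ⟨htr, by simp, by
          rw [Walk.support_cons, List.tail_cons]; exact hT⟩)
      have hmem : s(u, x) ∈ q.edges := by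
        by_contra hmem
        exact hnotTrail (Walk.isTrail_def _ |>.mpr (by
          rw [Walk.edges_cons, List.nodup_cons]
          exact ⟨hmem, hq.isTrail.edges_nodup⟩))
      obtain ⟨d, hd, hde⟩ := List.mem_map.mp (by rwa [Walk.edges] at hmem)
      have hde' : s(d.fst, d.snd) = s(u, x) := by
        rw [← hde]; rfl
      obtain ⟨a, b, hab⟩ := walk_split_dart q d hd
      have hqlen : q.length = n - 1 := by
        have := hn
        rw [Walk.length_cons] at this
        omega
      rcases Sym2.eq_iff.mp hde' with ⟨h1, h2⟩ | ⟨h1, h2⟩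
      · -- d goes u → x : both a and b are walks from x to u
        refine ih (n - 2) (by omega) ((a.copy rfl h1).append (b.copy h2 rfl).reverse) ?_ ?_
        · rw [Walk.length_append, Walk.length_reverse, Walk.length_copy, Walk.length_copy]
          omega
        · rw [Nat.odd_iff] at hodd ⊢
          omega
      · -- d goes x → u : a is closed at x, b is closed at u
        rcases Nat.even_or_odd a.length with he | ho
        · have hob : Odd b.length := by
            rw [Nat.even_iff] at he
            rw [Nat.odd_iff] at hodd ⊢
            omega
          exact ih b.length (by omega) (b.copy h2 rfl) (by rw [Walk.length_copy]) hob
        · exact ih a.length (by omega) (a.copy rfl h1) (by rw [Walk.length_copy]) ho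
  · -- some vertex repeats in the tail
    obtain ⟨w, hw2⟩ : ∃ w, 2 ≤ p.support.tail.count w := by
      by_contra hno
      push_neg at hno
      exact hT (List.nodup_iff_count_le_one.mpr fun a => by have := hno a; omega)
    have key : ∀ (c : G.Walk w w), c.length = n → 2 ≤ c.support.tail.count w →
        ∃ (w' : V) (c' : G.Walk w' w'), c'.IsCycle ∧ Odd c'.length := by
      intro c hcl hc2
      obtain ⟨c1, c2, hsum, h1, h2⟩ := closed_split c hc2
      rw [hcl] at hsum
      rcases Nat.even_or_odd c1.length with he | ho
      · have : Odd c2.length := by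
          rw [Nat.even_iff] at he
          rw [Nat.odd_iff] at hodd ⊢
          omega
        exact ih c2.length (by omega) c2 rfl this
      · exact ih c1.length (by omega) c1 rfl ho
    by_cases hwu : w = u
    · subst hwu
      exact key p hn hw2
    · have hw : w ∈ p.support := by
        have : w ∈ p.support.tail := List.count_pos_iff.mp (by omega)
        rw [p.support_eq_cons]
        exact List.mem_cons_of_mem _ this
      set t := p.takeUntil w hw with htd
      set d := p.dropUntil w hw with hdd
      have hspec : t.append d = p := p.take_spec hw
      refine key (d.append t) ?_ ?_
      · have := congrArg Walk.length hspec
        rw [Walk.length_append] at this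
        rw [Walk.length_append]
        omega
      · have hptail : p.support.tail = t.support.tail ++ d.support.tail := by
          rw [← hspec, Walk.tail_support_append]
        rw [Walk.tail_support_append, List.count_append]
        rw [hptail, List.count_append] at hw2
        omega


open SimpleGraph in
lemma colorable_of_all_closed_even {V : Type*} {G : SimpleGraph V}
    (h : ∀ (u : V) (p : G.Walk u u), Even p.length) : G.Colorable 2 := by
  classical
  have hreach : ∀ v : V, G.Reachable (Quot.out (G.connectedComponentMk v)) v := by
    intro v
    have := Quot.out_eq (G.connectedComponentMk v)
    exact ConnectedComponent.eq.mp this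
  let wlk : ∀ v : V, G.Walk (Quot.out (G.connectedComponentMk v)) v :=
    fun v => (hreach v).some
  let C : G.Coloring Bool := Coloring.mk (fun v => decide (Odd (wlk v).length)) ?valid
  case valid =>
    intro u v hadj hc
    have hcomp : G.connectedComponentMk u = G.connectedComponentMk v :=
      ConnectedComponent.eq.mpr hadj.reachable
    have hroot : Quot.out (G.connectedComponentMk v) = Quot.out (G.connectedComponentMk u) :=
      by rw [hcomp]
    -- closed walk: root → u → v → root
    have q : G.Walk (Quot.out (G.connectedComponentMk u)) (Quot.out (G.connectedComponentMk u)) :=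
      (wlk u).append (Walk.cons hadj ((wlk v).copy hroot rfl).reverse)
    have hq := h _ ((wlk u).append (Walk.cons hadj ((wlk v).copy hroot rfl).reverse))
    rw [Walk.length_append, Walk.length_cons, Walk.length_reverse, Walk.length_copy] at hq
    simp only [decide_eq_decide] at hc
    rw [Nat.even_add] at hq
    simp only [Nat.even_add_one, Nat.not_even_iff_odd] at hq
    rw [Nat.odd_iff, Nat.odd_iff] at hc
    rw [Nat.even_iff, Nat.odd_iff] at hq
    omega
  simpa using C.colorable


open SimpleGraph in
lemma support_getElem_eq_getVert {V : Type*} {G : SimpleGraph V} {u v : V} (p : G.Walk u v) :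
    ∀ (i : ℕ) (h : i < p.support.length), p.support[i] = p.getVert i := by
  induction p with
  | nil => intro i h; simp at h; subst h; rfl
  | cons hadj q ih =>
    intro i h
    cases i with
    | zero => rfl
    | succ i =>
      rw [Walk.support_cons, List.length_cons] at h
      have := ih i (by omega)
      simp only [Walk.support_cons, List.getElem_cons_succ, Walk.getVert_cons_succ]
      exact this

open SimpleGraph in
lemma edges_getElem_eq {V : Type*} {G : SimpleGraph V} {u v : V} (p : G.Walk u v) :
    ∀ (i : ℕ) (h : i < p.edges.length), p.edges[i] = s(p.getVert i, p.getVert (i + 1)) := by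
  induction p with
  | nil => intro i h; simp at h
  | @cons a b c hadj q ih =>
    intro i h
    cases i with
    | zero =>
      simp only [Walk.edges_cons, List.getElem_cons_zero, Walk.getVert_zero,
        Walk.getVert_cons_succ]
    | succ i =>
      rw [Walk.edges_cons, List.length_cons] at h
      simp only [Walk.edges_cons, List.getElem_cons_succ, Walk.getVert_cons_succ]
      exact ih i (by omega)

theorem bipartite_iff_incidence_matrix_totally_unimodular
    {V : Type*} [Fintype V] [DecidableEq V] (G : SimpleGraph V) :
    G.Colorable 2 ↔
      ∀ (k : ℕ) (f : Fin k → V) (g : Fin k → G.edgeSet),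
        Function.Injective f → Function.Injective g →
          (Matrix.of fun i j : Fin k =>
              if f i ∈ (g j : Sym2 V) then (1 : ℚ) else 0).det ∈ ({0, 1, -1} : Set ℚ) := by
  classical
  constructor
  · intro hcol k f g hf hg
    obtain ⟨C⟩ := hcol
    exact forward_aux (SimpleGraph.recolorOfEquiv G finTwoEquiv C) k f g hf hg
  · intro hTU
    by_contra hcol
    have hoc : ∃ (u : V) (p : G.Walk u u), Odd p.length := by
      by_contra hno
      push_neg at hno
      simp only [Nat.not_odd_iff_even] at hno
      exact hcol (colorable_of_all_closed_even hno)
    obtain ⟨u, p, hp⟩ := hoc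
    obtain ⟨w, c, hc, hcodd⟩ := exists_odd_cycle p.length p rfl hp
    have h3 : 3 ≤ c.length := hc.three_le_length
    obtain ⟨htrail, hnenil, htn⟩ := (SimpleGraph.Walk.isCycle_def c).mp hc
    have hedn : c.edges.Nodup := htrail.edges_nodup
    obtain ⟨m, hm⟩ : ∃ m, c.length = m + 1 := ⟨c.length - 1, by omega⟩
    have hm2 : 2 ≤ m := by omega
    have htlen : c.support.tail.length = m + 1 := by
      have := c.length_support
      rw [List.length_tail, this]
      omega
    have helen : c.edges.length = m + 1 := by rw [c.length_edges, hm]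
    have htail : ∀ (i : ℕ) (h : i < m + 1),
        c.support.tail[i]'(by rw [htlen]; exact h) = c.getVert (i + 1) := by
      intro i h
      rw [List.getElem_tail]
      exact support_getElem_eq_getVert c (i + 1) (by rw [c.length_support, hm]; omega)
    have hgv : ∀ a b : ℕ, 1 ≤ a → a ≤ m + 1 → 1 ≤ b → b ≤ m + 1 →
        (c.getVert a = c.getVert b ↔ a = b) := by
      intro a b ha1 ha2 hb1 hb2
      constructor
      · intro hab
        have h1 := htail (a - 1) (by omega)
        have h2 := htail (b - 1) (by omega)
        have ha' : a - 1 + 1 = a := by omega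
        have hb' : b - 1 + 1 = b := by omega
        rw [ha'] at h1
        rw [hb'] at h2
        have h12 : c.support.tail[a-1]'(by rw [htlen]; omega)
            = c.support.tail[b-1]'(by rw [htlen]; omega) := by rw [h1, h2, hab]
        have := (List.Nodup.getElem_inj_iff htn).mp h12
        omega
      · rintro rfl; rfl
    set f : Fin (m + 1) → V := fun i => c.getVert ((i : ℕ) + 1) with hfdef
    set g : Fin (m + 1) → G.edgeSet := fun j =>
      ⟨c.edges[(j : ℕ)]'(by rw [helen]; exact j.isLt),
        c.edges_subset_edgeSet (List.getElem_mem _)⟩ with hgdef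
    have hf : Function.Injective f := by
      intro i j hij
      have := (hgv ((i : ℕ) + 1) ((j : ℕ) + 1) (by omega) (by omega) (by omega) (by omega)).mp hij
      exact Fin.ext (by omega)
    have hg : Function.Injective g := by
      intro i j hij
      have h12 : c.edges[(i : ℕ)]'(by rw [helen]; exact i.isLt)
          = c.edges[(j : ℕ)]'(by rw [helen]; exact j.isLt) := congrArg Subtype.val hij
      exact Fin.ext ((List.Nodup.getElem_inj_iff hedn).mp h12)
    have hTUc := hTU (m + 1) f g hf hg
    have hmat : (Matrix.of fun i j : Fin (m + 1) =>
        if f i ∈ (g j : Sym2 V) then (1 : ℚ) else 0)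
        = Matrix.of fun i j : Fin (m + 1) => if i = j ∨ j = i + 1 then (1 : ℚ) else 0 := by
      funext i j
      simp only [Matrix.of_apply]
      have hedge : (g j : Sym2 V) = s(c.getVert (j : ℕ), c.getVert ((j : ℕ) + 1)) :=
        edges_getElem_eq c (j : ℕ) (by rw [helen]; exact j.isLt)
      have hcond : (f i ∈ (g j : Sym2 V)) ↔ (i = j ∨ j = i + 1) := by
        rw [hedge, Sym2.mem_iff, hfdef]
        simp only
        have hB : (c.getVert ((i : ℕ) + 1) = c.getVert ((j : ℕ) + 1)) ↔ (i : ℕ) = (j : ℕ) := by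
          rw [hgv _ _ (by omega) (by omega) (by omega) (by omega)]
          omega
        have hA : (c.getVert ((i : ℕ) + 1) = c.getVert (j : ℕ)) ↔
            (((j : ℕ) = 0 ∧ (i : ℕ) = m) ∨ (1 ≤ (j : ℕ) ∧ (i : ℕ) + 1 = (j : ℕ))) := by
          by_cases hj0 : (j : ℕ) = 0
          · rw [hj0]
            have h0 : c.getVert 0 = c.getVert (m + 1) := by
              rw [c.getVert_zero, ← hm, c.getVert_length]
            rw [h0, hgv _ _ (by omega) (by omega) (by omega) (by omega)]
            omega
          · rw [hgv _ _ (by omega) (by omega) (by omega) (by omega)]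
            omega
        rw [hA, hB, Fin.ext_iff, fin_eq_add_one_iff]
        have := i.isLt
        have := j.isLt
        omega
      rw [if_congr hcond rfl rfl]
    rw [hmat] at hTUc
    rw [cyc_det m hm2 (hm ▸ hcodd)] at hTUc
    simp only [Set.mem_insert_iff, Set.mem_singleton_iff] at hTUc
    norm_num at hTUc
end

section
/- Cayley's formula: for every n ≥ 1, the number of simple graphs on the labeled vertex set {1, …, n} that are trees equals n^{n−2} (with the exponent n−2 truncated at 0 when n ≤ 2). -/
/-!
Joyal's bijection. A tree with a chosen root `ρ` is the same thing as a parent map `p` (the root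
is fixed and every vertex reaches it under iteration), the tree being the graph of the edges
`{v, p v}`. Mark a second vertex `b`: the path from `b` to `ρ` (the spine) arranges a set `S` in a
line, and the rest of the tree is a rooted forest hanging off `S`. An endofunction of `V` is
likewise a permutation of its set `S` of periodic points with a rooted forest hanging off `S`.
Linear arrangements and permutations of `S` are equinumerous, so doubly marked trees are as many
as endofunctions: `T · n² = nⁿ`.
-/

open Function SimpleGraph Finset

namespace Cayley

variable {V : Type*}

structure IsParentMap (p : V → V) (root : V) : Prop where
  map_root : p root = root
  exists_iterate_eq_root : ∀ v, ∃ k, p^[k] v = root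

/-- `fromRel` discards the loop `p ρ = ρ` at the root. -/
def parentGraph (p : V → V) : SimpleGraph V := fromRel fun v w => p v = w

lemma parentGraph_adj {p : V → V} {v w : V} :
    (parentGraph p).Adj v w ↔ v ≠ w ∧ (p v = w ∨ p w = v) :=
  fromRel_adj ..

lemma parentGraph_reachable_iterate (p : V → V) (v : V) (k : ℕ) :
    (parentGraph p).Reachable v (p^[k] v) := by
  induction k with
  | zero => rfl
  | succ k ih =>
    refine ih.trans ?_
    rw [iterate_succ_apply']
    by_cases h : p^[k] v = p (p^[k] v)
    · rw [← h]
    · exact (parentGraph_adj.2 ⟨h, .inl rfl⟩).reachable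

lemma exists_isParentMap_parentGraph_le {G : SimpleGraph V} (hG : G.Connected) (ρ : V) :
    ∃ p, IsParentMap p ρ ∧ parentGraph p ≤ G := by
  classical
  have closer : ∀ v ≠ ρ, ∃ w, G.Adj v w ∧ G.dist w ρ < G.dist v ρ := by
    intro v hv
    obtain ⟨_ | ⟨hadj, walk⟩, hlen⟩ := hG.exists_walk_length_eq_dist v ρ
    · exact absurd rfl hv
    · exact ⟨_, hadj, by have := dist_le walk; simp only [Walk.length_cons] at hlen; omega⟩
  choose! next hadj hlt using closer
  refine ⟨update next ρ ρ, ⟨by simp, fun v => ?_⟩, fun v w => ?_⟩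
  · induction hd : G.dist v ρ using Nat.strong_induction_on generalizing v with
    | _ d ih =>
      by_cases hv : v = ρ
      · exact ⟨0, hv⟩
      · obtain ⟨k, hk⟩ := ih _ (hd ▸ hlt v hv) (next v) rfl
        exact ⟨k + 1, by rwa [iterate_succ_apply, update_of_ne hv]⟩
  · rw [parentGraph_adj]
    rintro ⟨hne, rfl | rfl⟩
    · have hv : v ≠ ρ := by rintro rfl; simp at hne
      simpa [hv] using hadj v hv
    · have hw : w ≠ ρ := by rintro rfl; simp at hne
      simpa [hw] using (hadj w hw).symm

namespace IsParentMap

variable {p q : V → V} {ρ : V}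

lemma eq_root_of_apply_apply_eq (hp : IsParentMap p ρ) {v : V} (h : p (p v) = v) : v = ρ := by
  have orbit : ∀ k, p^[k] v = v ∨ p^[k] v = p v := by
    intro k
    induction k with
    | zero => simp
    | succ k ih => rcases ih with ih | ih <;> simp [iterate_succ_apply', ih, h]
  obtain ⟨k, hk⟩ := hp.exists_iterate_eq_root v
  rcases orbit k with h' | h' <;> rw [hk] at h'
  · exact h'.symm
  · rw [← h, ← h', hp.map_root]

lemma eq_root_of_apply_eq (hp : IsParentMap p ρ) {v : V} (h : p v = v) : v = ρ :=
  hp.eq_root_of_apply_apply_eq (by rw [h, h])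

lemma parentGraph_connected (hp : IsParentMap p ρ) : (parentGraph p).Connected := by
  have : Nonempty V := ⟨ρ⟩
  refine (connected_iff_exists_forall_reachable _).2 ⟨ρ, fun v => ?_⟩
  obtain ⟨k, hk⟩ := hp.exists_iterate_eq_root v
  exact hk ▸ (parentGraph_reachable_iterate p v k).symm

lemma eq_of_parentGraph_le (hp : IsParentMap p ρ) (hq : IsParentMap q ρ)
    (hle : parentGraph q ≤ parentGraph p) : q = p := by
  funext v
  obtain ⟨k, hk⟩ := hq.exists_iterate_eq_root v
  induction k generalizing v with
  | zero => obtain rfl : v = ρ := hk; rw [hp.map_root, hq.map_root]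
  | succ k ih =>
    by_cases hv : q v = v
    · obtain rfl := hq.eq_root_of_apply_eq hv
      rw [hp.map_root, hq.map_root]
    have hpq := ih (q v) (by rwa [← iterate_succ_apply])
    rcases (parentGraph_adj.1 (hle (parentGraph_adj.2 ⟨Ne.symm hv, .inl rfl⟩))).2 with h | h
    · exact h.symm
    -- `q v` would be a child of `v` for `p`, so `q` would swap `v` and `q v`
    · exact absurd (hq.eq_root_of_apply_apply_eq (hpq ▸ h) ▸ hq.map_root) hv

lemma parentGraph_isTree (hp : IsParentMap p ρ) : (parentGraph p).IsTree := by
  refine isTree_iff_minimal_connected.2 ⟨hp.parentGraph_connected, fun H hH hle => ?_⟩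
  obtain ⟨q, hq, hqH⟩ := exists_isParentMap_parentGraph_le hH ρ
  exact hp.eq_of_parentGraph_le hq (hqH.trans hle) ▸ hqH

end IsParentMap

lemma exists_isParentMap_parentGraph_eq {G : SimpleGraph V} (hG : G.IsTree) (ρ : V) :
    ∃ p, IsParentMap p ρ ∧ parentGraph p = G := by
  obtain ⟨p, hp, hle⟩ := exists_isParentMap_parentGraph_le hG.connected ρ
  exact ⟨p, hp, (isTree_iff_minimal_connected.1 hG).eq_of_le hp.parentGraph_connected hle⟩

theorem card_isParentMap :
    Nat.card {q : (V → V) × V // IsParentMap q.1 q.2} =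
      Nat.card {G : SimpleGraph V // G.IsTree} * Nat.card V := by
  rw [← Nat.card_prod]
  refine Nat.card_eq_of_bijective (fun q => (⟨parentGraph q.1.1, q.2.parentGraph_isTree⟩, q.1.2))
    ⟨fun ⟨⟨p, ρ⟩, hp⟩ ⟨⟨q, ρ'⟩, hq⟩ h => ?_, fun ⟨⟨G, hG⟩, ρ⟩ => ?_⟩
  · simp only [Prod.mk.injEq, Subtype.mk.injEq] at h
    obtain ⟨hpq, rfl⟩ := h
    simpa using hq.eq_of_parentGraph_le hp hpq.le
  · obtain ⟨p, hp, rfl⟩ := exists_isParentMap_parentGraph_eq hG ρ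
    exact ⟨⟨(p, ρ), hp⟩, rfl⟩

lemma exists_iterate_mem_of_eqOn_compl {S : Set V} {f g : V → V} (hfg : ∀ v ∉ S, f v = g v)
    {v : V} (hv : ∃ k, g^[k] v ∈ S) : ∃ k, f^[k] v ∈ S := by
  obtain ⟨k, hk⟩ := hv
  induction k generalizing v with
  | zero => exact ⟨0, hk⟩
  | succ k ih =>
    by_cases hvS : v ∈ S
    · exact ⟨0, hvS⟩
    · obtain ⟨j, hj⟩ := ih (v := g v) hk
      exact ⟨j + 1, by rwa [iterate_succ_apply, hfg v hvS]⟩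

lemma exists_iterate_mem_periodicPts [Finite V] (f : V → V) (v : V) :
    ∃ k, f^[k] v ∈ periodicPts f := by
  obtain ⟨m, n, heq, hne⟩ : ∃ m n, f^[m] v = f^[n] v ∧ m ≠ n := by
    simpa [Injective] using not_injective_infinite_finite (f^[·] v)
  wlog hlt : m < n generalizing m n
  · exact this n m heq.symm hne.symm (by omega)
  refine ⟨m, mk_mem_periodicPts (n := n - m) (by omega) ?_⟩
  rw [IsPeriodicPt, IsFixedPt, ← iterate_add_apply, Nat.sub_add_cancel hlt.le, heq]

lemma periodicPts_subset_of_mapsTo {S : Set V} {f : V → V} (hS : Set.MapsTo f S S)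
    (h : ∀ v, ∃ k, f^[k] v ∈ S) : periodicPts f ⊆ S := by
  intro v hv
  obtain ⟨n, hn, hper⟩ := mem_periodicPts.1 hv
  obtain ⟨k, hk⟩ := h v
  have : f^[n * (k + 1) - k] (f^[k] v) ∈ S := hS.iterate _ hk
  rwa [← iterate_add_apply, Nat.sub_add_cancel (by nlinarith), (hper.mul_const _).eq] at this

/-- `r` is the parent map of a forest whose set of roots is `S`. -/
structure IsRootedForest (S : Finset V) (r : V → V) : Prop where
  apply_eq_self : ∀ v ∈ S, r v = v
  exists_iterate_mem : ∀ v, ∃ k, r^[k] v ∈ S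

lemma IsRootedForest.nonempty [Nonempty V] {S : Finset V} {r : V → V}
    (hr : IsRootedForest S r) : S.Nonempty :=
  let ⟨_, h⟩ := hr.exists_iterate_mem (Classical.arbitrary V)
  ⟨_, h⟩

section Finite

variable [Finite V]

noncomputable def periodicPtsFinset (f : V → V) : Finset V :=
  (Set.toFinite (periodicPts f)).toFinset

@[simp] lemma coe_periodicPtsFinset (f : V → V) :
    (periodicPtsFinset f : Set V) = periodicPts f :=
  Set.Finite.coe_toFinset _

noncomputable def spine (p : V → V) (b : V) : Finset V :=
  (Set.toFinite (Set.range fun j => p^[j] b)).toFinset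

lemma mem_spine {p : V → V} {b v : V} : v ∈ spine p b ↔ ∃ j, p^[j] b = v := by
  simp [spine]

end Finite

section DecidableEq

variable [DecidableEq V] {S : Finset V}

def patch (S : Finset V) (σ : S → V) (r : V → V) (v : V) : V :=
  if h : v ∈ S then σ ⟨v, h⟩ else r v

@[simp] lemma patch_coe {σ : S → V} {r : V → V} (v : S) : patch S σ r v = σ v := dif_pos v.2

lemma patch_of_notMem {σ : S → V} {r : V → V} {v : V} (hv : v ∉ S) : patch S σ r v = r v :=
  dif_neg hv

lemma isRootedForest_patch_val {f : V → V} (h : ∀ v, ∃ k, f^[k] v ∈ S) :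
    IsRootedForest S (patch S Subtype.val f) where
  apply_eq_self v hv := patch_coe ⟨v, hv⟩
  exists_iterate_mem v := exists_iterate_mem_of_eqOn_compl (fun _ => patch_of_notMem) (h v)

lemma IsRootedForest.patch_val_eq {r : V → V} (hr : IsRootedForest S r) (f : V → V)
    (hf : ∀ v ∉ S, f v = r v) : patch S Subtype.val f = r := by
  funext v
  by_cases hv : v ∈ S
  · exact (patch_coe ⟨v, hv⟩).trans (hr.apply_eq_self v hv).symm
  · rw [patch_of_notMem hv, hf v hv]

lemma periodicPts_patch (σ : Equiv.Perm S) {r : V → V} (hr : IsRootedForest S r) :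
    periodicPts (patch S (σ ·) r) = S := by
  have hsemi : Semiconj Subtype.val σ (patch S (σ ·) r) :=
    fun v => (patch_coe (σ := fun x => (σ x : V)) v).symm
  refine (periodicPts_subset_of_mapsTo (fun v hv => ?_) fun v => ?_).antisymm fun v hv => ?_
  · simp [patch_coe ⟨v, hv⟩]
  · exact exists_iterate_mem_of_eqOn_compl (fun _ => patch_of_notMem) (hr.exists_iterate_mem v)
  · exact hsemi.mapsTo_periodicPts (σ.injective.mem_periodicPts ⟨v, hv⟩)

noncomputable def periodicFiberEquiv [Finite V] (S : Finset V) :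
    {f : V → V // periodicPtsFinset f = S} ≃ Equiv.Perm S × {r // IsRootedForest S r} where
  toFun f :=
    have hS : periodicPts f.1 = S := by rw [← coe_periodicPtsFinset, f.2]
    have hbij : Set.BijOn f.1 S S := hS ▸ bijOn_periodicPts f.1
    (Equiv.ofBijective _ hbij.bijective,
      ⟨patch S Subtype.val f.1, isRootedForest_patch_val fun v => by
        simpa [hS] using exists_iterate_mem_periodicPts f.1 v⟩)
  invFun σr := ⟨patch S (σr.1 ·) σr.2.1, by
    rw [← coe_inj, coe_periodicPtsFinset, periodicPts_patch σr.1 σr.2.2]⟩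
  left_inv f := by
    ext v
    by_cases hv : v ∈ S <;> simp [patch, hv]
  right_inv σr := by
    ext v
    · simp
    · by_cases hv : v ∈ S <;> simp [patch, hv, σr.2.2.apply_eq_self]

namespace IsParentMap

variable {p : V → V} {ρ : V} (hp : IsParentMap p ρ)
include hp

noncomputable def depth (v : V) : ℕ := Nat.find (hp.exists_iterate_eq_root v)

lemma iterate_depth (v : V) : p^[hp.depth v] v = ρ := Nat.find_spec (hp.exists_iterate_eq_root v)

lemma iterate_of_depth_le {v : V} {j : ℕ} (h : hp.depth v ≤ j) : p^[j] v = ρ := by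
  rw [← Nat.sub_add_cancel h, iterate_add_apply, hp.iterate_depth, iterate_fixed hp.map_root]

lemma iterate_min_depth (v : V) (j : ℕ) : p^[min j (hp.depth v)] v = p^[j] v := by
  rcases le_total j (hp.depth v) with h | h
  · rw [min_eq_left h]
  · rw [min_eq_right h, hp.iterate_depth, hp.iterate_of_depth_le h]

/-- A repetition `p^[i] v = p^[j] v` with `i < j ≤ depth v` would reach the root at time
`depth v - j + i < depth v`. -/
lemma iterate_injOn_Iic_depth (v : V) : Set.InjOn (p^[·] v) (Set.Iic (hp.depth v)) := by
  intro i hi j hj hij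
  wlog hlt : i < j generalizing i j
  · exact (lt_or_eq_of_le (not_lt.1 hlt)).elim (fun h => (this hj hi hij.symm h).symm) Eq.symm
  refine absurd ?_ (Nat.find_min (hp.exists_iterate_eq_root v) (m := hp.depth v - j + i) (by
    simp only [Set.mem_Iic] at hj; unfold depth at hj ⊢; omega))
  simp only at hij
  rw [iterate_add_apply, hij, ← iterate_add_apply, Nat.sub_add_cancel hj, hp.iterate_depth]

variable [Finite V]

lemma card_spine (v : V) : #(spine p v) = hp.depth v + 1 := by
  have : spine p v = (range (hp.depth v + 1)).image (p^[·] v) := by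
    ext w
    simp only [mem_spine, mem_image, mem_range, Nat.lt_succ_iff]
    refine ⟨fun ⟨j, hj⟩ => ⟨_, min_le_right _ _, by rw [hp.iterate_min_depth, hj]⟩,
      fun ⟨j, _, hj⟩ => ⟨j, hj⟩⟩
  rw [this, card_image_of_injOn (fun i hi j hj => hp.iterate_injOn_Iic_depth v
    (Nat.lt_succ_iff.1 (mem_range.1 hi)) (Nat.lt_succ_iff.1 (mem_range.1 hj))), card_range]

lemma exists_iterate_mem_spine (b v : V) : ∃ k, p^[k] v ∈ spine p b :=
  (hp.exists_iterate_eq_root v).imp fun _ h => by rw [h]; exact mem_spine.2 ⟨_, hp.iterate_depth b⟩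

end IsParentMap

def capSucc {k : ℕ} (j : Fin k) : Fin k := ⟨min (j + 1) (k - 1), by omega⟩

/-- The parent map with spine `c 0, c 1, …, c (#S - 1)` (from the marked vertex to the root),
equal to `r` off `S`. -/
noncomputable def pathParent (c : Fin #S ≃ S) (r : V → V) : V → V :=
  patch S (fun v => c (capSucc (c.symm v))) r

lemma pathParent_apply (c : Fin #S ≃ S) (r : V → V) (i : Fin #S) :
    pathParent c r (c i) = c (capSucc i) := by
  simp [pathParent]

lemma pathParent_iterate (c : Fin #S ≃ S) (r : V → V) (i : Fin #S) (j : ℕ) :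
    (pathParent c r)^[j] (c i) = c ⟨min (i + j) (#S - 1), by omega⟩ := by
  induction j with
  | zero => simp [Nat.min_eq_left (Nat.le_sub_one_of_lt i.2)]
  | succ j ih =>
    rw [iterate_succ_apply', ih, pathParent_apply]
    congr 2
    exact Fin.ext (by simp only [capSucc]; omega)

lemma isParentMap_pathParent (c : Fin #S ≃ S) {r : V → V} (hr : IsRootedForest S r)
    (hS : 0 < #S) : IsParentMap (pathParent c r) (c ⟨#S - 1, by omega⟩) where
  map_root := by
    rw [pathParent_apply]
    congr 2
    exact Fin.ext (by simp [capSucc])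
  exists_iterate_eq_root v := by
    obtain ⟨k, hk⟩ := exists_iterate_mem_of_eqOn_compl (f := pathParent c r)
      (fun _ => patch_of_notMem) (hr.exists_iterate_mem v)
    refine ⟨#S - 1 + k, ?_⟩
    rw [iterate_add_apply, show (pathParent c r)^[k] v = c (c.symm ⟨_, hk⟩) by simp,
      pathParent_iterate]
    congr 2
    exact Fin.ext (by simp)

variable [Finite V]

variable {p : V → V} {ρ b : V}

noncomputable def spineEquiv (hp : IsParentMap p ρ) (hS : spine p b = S) : Fin #S ≃ S :=
  Equiv.ofBijective (fun j => ⟨p^[j] b, hS.subset (mem_spine.2 ⟨j, rfl⟩)⟩) <| by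
    subst hS
    refine (Fintype.bijective_iff_injective_and_card _).2 ⟨fun i j hij => ?_, by simp⟩
    have := hp.card_spine b
    exact Fin.ext (hp.iterate_injOn_Iic_depth b (by simp; omega) (by simp; omega)
      (congrArg Subtype.val hij))

@[simp] lemma coe_spineEquiv (hp : IsParentMap p ρ) (hS : spine p b = S) (j : Fin #S) :
    (spineEquiv hp hS j : V) = p^[j] b := rfl

lemma spineEquiv_last (hp : IsParentMap p ρ) (hS : spine p b = S) :
    (spineEquiv hp hS ⟨#S - 1, by have := hS ▸ hp.card_spine b; omega⟩ : V) = ρ := by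
  have := hS ▸ hp.card_spine b
  simp [this, hp.iterate_depth]

lemma pathParent_spineEquiv (hp : IsParentMap p ρ) (hS : spine p b = S) :
    pathParent (spineEquiv hp hS) (patch S Subtype.val p) = p := by
  funext v
  by_cases hv : v ∈ S
  · obtain ⟨i, rfl⟩ : ∃ i, (spineEquiv hp hS i : V) = v :=
      ⟨_, congrArg Subtype.val ((spineEquiv hp hS).apply_symm_apply ⟨v, hv⟩)⟩
    have := hS ▸ hp.card_spine b
    rw [pathParent_apply, coe_spineEquiv, coe_spineEquiv, capSucc]
    simp only [this, Nat.add_sub_cancel, hp.iterate_min_depth, iterate_succ_apply']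
  · simp [pathParent, patch_of_notMem hv]

lemma spine_pathParent (c : Fin #S ≃ S) (r : V → V) (hS : 0 < #S) :
    spine (pathParent c r) (c ⟨0, hS⟩) = S := by
  ext v
  refine ⟨fun hv => ?_, fun hv => mem_spine.2 ⟨c.symm ⟨v, hv⟩, ?_⟩⟩
  · obtain ⟨j, rfl⟩ := mem_spine.1 hv
    rw [pathParent_iterate]
    exact coe_mem _
  · rw [pathParent_iterate]
    have : (c.symm ⟨v, hv⟩ : ℕ) ≤ #S - 1 := by omega
    simp [Nat.min_eq_left this]

noncomputable def spineFiberEquiv [Nonempty V] (S : Finset V) :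
    {x : {q : (V → V) × V // IsParentMap q.1 q.2} × V // spine x.1.1.1 x.2 = S} ≃
      (Fin #S ≃ S) × {r // IsRootedForest S r} where
  toFun x := (spineEquiv x.1.1.2 x.2, ⟨patch S Subtype.val x.1.1.1.1,
    isRootedForest_patch_val fun v => by
      simpa only [← x.2] using x.1.1.2.exists_iterate_mem_spine x.1.2 v⟩)
  invFun cr :=
    have hS : 0 < #S := cr.2.2.nonempty.card_pos
    ⟨(⟨(pathParent cr.1 cr.2.1, _), isParentMap_pathParent cr.1 cr.2.2 hS⟩, cr.1 ⟨0, hS⟩),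
      spine_pathParent cr.1 cr.2.1 hS⟩
  left_inv := fun ⟨⟨⟨⟨p, ρ⟩, hp⟩, b⟩, hS⟩ => Subtype.ext <| Prod.ext
    (Subtype.ext <| Prod.ext (pathParent_spineEquiv hp hS) (spineEquiv_last hp hS)) rfl
  right_inv := fun ⟨c, r, hr⟩ => by
    refine Prod.ext (Equiv.ext fun j => Subtype.ext ?_) (Subtype.ext ?_)
    · simp [pathParent_iterate, Nat.min_eq_left (Nat.le_sub_one_of_lt j.2)]
    · exact hr.patch_val_eq (pathParent c r) fun _ => patch_of_notMem

end DecidableEq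

theorem card_isParentMap_prod [Fintype V] [DecidableEq V] [Nonempty V] :
    Nat.card ({q : (V → V) × V // IsParentMap q.1 q.2} × V) = Nat.card V ^ Nat.card V := by
  let φ (x : {q : (V → V) × V // IsParentMap q.1 q.2} × V) : Finset V := spine x.1.1.1 x.2
  calc _ = ∑ S, Nat.card {x // φ x = S} := by
        rw [← Nat.card_sigma, Nat.card_congr (Equiv.sigmaFiberEquiv φ)]
    _ = ∑ S, Nat.card {f : V → V // periodicPtsFinset f = S} :=
        Finset.sum_congr rfl fun S _ => Nat.card_congr <| (spineFiberEquiv S).trans <|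
          ((S.equivFin.symm.equivCongr (Equiv.refl S)).prodCongr (Equiv.refl _)).trans
            (periodicFiberEquiv S).symm
    _ = Nat.card (V → V) := by
        rw [← Nat.card_sigma, Nat.card_congr (Equiv.sigmaFiberEquiv _)]
    _ = _ := Nat.card_fun

end Cayley

open Cayley in
theorem SimpleGraph.card_isTree {V : Type*} [Finite V] [Nonempty V] :
    Nat.card {G : SimpleGraph V // G.IsTree} = Nat.card V ^ (Nat.card V - 2) := by
  classical
  have := Fintype.ofFinite V
  have key : Nat.card {G : SimpleGraph V // G.IsTree} * Nat.card V * Nat.card V =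
      Nat.card V ^ Nat.card V := by
    rw [← card_isParentMap, ← Nat.card_prod, card_isParentMap_prod]
  have hpos : 0 < Nat.card V := Nat.card_pos
  have hpow : Nat.card V ^ Nat.card V =
      Nat.card V ^ (Nat.card V - 2) * Nat.card V * Nat.card V := by
    rcases (by omega : Nat.card V = 1 ∨ 2 ≤ Nat.card V) with h | h
    · rw [h]; rfl
    · rw [mul_assoc, ← sq, ← pow_add, Nat.sub_add_cancel h]
  exact Nat.eq_of_mul_eq_mul_right hpos (Nat.eq_of_mul_eq_mul_right hpos (key.trans hpow))

theorem cayley_formula (n : ℕ) (hn : 1 ≤ n) :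
    {G : SimpleGraph (Fin n) | G.Connected ∧ G.IsAcyclic}.ncard = n ^ (n - 2) := by
  have : Nonempty (Fin n) := ⟨⟨0, hn⟩⟩
  simp_rw [← isTree_iff]
  have := SimpleGraph.card_isTree (V := Fin n)
  rwa [Nat.card_fin] at this
end

section
/- Veblen's theorem: a finite simple graph G has all vertex degrees even if and only if there exists a finite collection of cycles of G whose edge sets are pairwise disjoint and whose union equals the edge set of G. -/
/-!
A vertex lies on an even number of edges of a closed trail, so edge-disjoint cycles covering `G`
give every vertex even degree. Conversely, if all degrees are even and `G` has an edge, take a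
path that cannot be extended at its start `x`: every neighbour of `x` lies on it, and since
`deg x ≥ 2` some neighbour other than the next vertex closes a cycle through `x`. Deleting the
edges of that cycle keeps all degrees even and strictly shrinks `G`, so induction on the finite
lattice of graphs on `V` finishes.
-/

theorem List.nodup_flatten_ofFn {α : Type*} {n : ℕ} {L : Fin n → List α} :
    (List.ofFn L).flatten.Nodup ↔ (∀ i, (L i).Nodup) ∧ ∀ i j, i ≠ j → (L i).Disjoint (L j) := by
  rw [List.nodup_flatten, List.forall_mem_ofFn_iff, List.pairwise_ofFn]
  refine and_congr_right fun _ => ⟨fun h i j hij => ?_, fun h i j hij => h i j hij.ne⟩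
  rcases hij.lt_or_gt with hlt | hlt
  · exact h hlt
  · exact (h hlt).symm

namespace SimpleGraph

variable {V : Type*} {G : SimpleGraph V}

theorem degree_eq_countP_of_nodup [DecidableEq V] {l : List (Sym2 V)} (hl : l.Nodup)
    (hG : ∀ e, e ∈ G.edgeSet ↔ e ∈ l) (v : V) [Fintype (G.neighborSet v)] :
    G.degree v = l.countP (v ∈ ·) := by
  rw [← card_incidenceFinset_eq_degree, List.countP_eq_length_filter,
    ← List.toFinset_card_of_nodup (hl.filter _)]
  congr 1
  ext e
  simp [incidenceSet, hG, and_comm]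

theorem Walk.IsTrail.even_countP_edges_of_closed [DecidableEq V] {u : V} {c : G.Walk u u}
    (hc : c.IsTrail) (v : V) : Even (c.edges.countP (v ∈ ·)) :=
  (hc.even_countP_edges_iff v).mpr fun h => absurd rfl h

theorem Walk.IsPath.exists_isPath_forall_adj_mem_support [Fintype V] {x y : V} {p : G.Walk x y}
    (hp : p.IsPath) : ∃ (x' : V) (q : G.Walk x' y),
      q.IsPath ∧ p.length ≤ q.length ∧ ∀ w, G.Adj x' w → w ∈ q.support := by
  by_cases h : ∀ w, G.Adj x w → w ∈ p.support
  · exact ⟨x, p, hp, le_rfl, h⟩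
  push Not at h
  obtain ⟨w, hxw, hw⟩ := h
  have hq : (Walk.cons hxw.symm p).IsPath := hp.cons hw
  obtain ⟨x', q, hq', hlen, hadj⟩ := Walk.IsPath.exists_isPath_forall_adj_mem_support hq
  exact ⟨x', q, hq', (Nat.le_succ _).trans hlen, hadj⟩
termination_by Fintype.card V - p.length
decreasing_by
  have := hq.length_lt
  simp only [Walk.length_cons] at this ⊢
  omega

theorem exists_isCycle_of_even_degree [Fintype V] [DecidableRel G.Adj]
    (hdeg : ∀ v, Even (G.degree v)) {a b : V} (hab : G.Adj a b) :
    ∃ (u : V) (c : G.Walk u u), c.IsCycle := by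
  classical
  obtain ⟨x, p, hp, hlen, hsupp⟩ :=
    (Walk.IsPath.nil.cons (by simpa using hab.ne) : (Walk.cons hab .nil).IsPath)
      |>.exists_isPath_forall_adj_mem_support
  have hnil : ¬p.Nil := by
    rw [← Walk.length_eq_zero_iff]
    simp only [Walk.length_cons, Walk.length_nil] at hlen
    omega
  obtain ⟨d, hxd, hd⟩ : ∃ d, G.Adj x d ∧ d ≠ p.snd := by
    have hpos : 0 < G.degree x := G.degree_pos_iff_exists_adj x |>.mpr ⟨_, p.adj_snd hnil⟩
    have : 1 < (G.neighborFinset x).card := by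
      rw [card_neighborFinset_eq_degree]
      obtain ⟨k, hk⟩ := hdeg x
      omega
    obtain ⟨d, hd, hne⟩ := Finset.exists_mem_ne this p.snd
    exact ⟨d, (mem_neighborFinset _ _ _).mp hd, hne⟩
  refine ⟨d, .cons hxd.symm (p.takeUntil d (hsupp d hxd)),
    (Walk.cons_isCycle_iff _ _).mpr ⟨hp.takeUntil _, fun he => hd ?_⟩⟩
  exact hp.eq_snd_of_mem_edges (Sym2.eq_swap ▸ p.edges_takeUntil_subset_edges _ he)

theorem Walk.IsTrail.even_degree_deleteEdges_iff [Fintype V] [DecidableEq V] [DecidableRel G.Adj]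
    {u : V} {c : G.Walk u u} (hc : c.IsTrail) (v : V) :
    Even ((G.deleteEdges {e | e ∈ c.edges}).degree v) ↔ Even (G.degree v) := by
  set G' := G.deleteEdges {e | e ∈ c.edges}
  have hG' : ∀ e, e ∈ G'.edgeFinset.toList ↔ e ∈ G.edgeSet ∧ e ∉ c.edges := by simp [G']
  have hdeg' : G'.degree v = G'.edgeFinset.toList.countP (v ∈ ·) :=
    degree_eq_countP_of_nodup (Finset.nodup_toList _) (by simp) v
  have hdeg : G.degree v = (c.edges ++ G'.edgeFinset.toList).countP (v ∈ ·) := by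
    refine degree_eq_countP_of_nodup ?_ (fun e => ?_) v
    · exact List.nodup_append.mpr ⟨hc.edges_nodup, Finset.nodup_toList _,
        fun e he e' he' hee' => ((hG' e').mp he').2 (hee' ▸ he)⟩
    · have := c.edges_subset_edgeSet (e := e)
      rw [List.mem_append, hG']
      tauto
  rw [hdeg, List.countP_append, Nat.even_add, ← hdeg']
  exact (iff_true_left (hc.even_countP_edges_of_closed v)).symm

theorem even_degree_of_isTrail_partition [Fintype V] [DecidableRel G.Adj] {n : ℕ}
    {v : Fin n → V} {c : ∀ i, G.Walk (v i) (v i)} (hc : ∀ i, (c i).IsTrail)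
    (hnodup : (List.ofFn fun i => (c i).edges).flatten.Nodup)
    (hcover : ∀ e, e ∈ G.edgeSet ↔ e ∈ (List.ofFn fun i => (c i).edges).flatten) (x : V) :
    Even (G.degree x) := by
  classical
  rw [degree_eq_countP_of_nodup hnodup hcover, List.countP_flatten, List.map_ofFn, List.sum_ofFn]
  exact Finset.even_sum _ fun i _ => (hc i).even_countP_edges_of_closed x

theorem exists_isCycle_partition_of_even_degree [Fintype V] [inst : DecidableRel G.Adj]
    (hdeg : ∀ v, Even (G.degree v)) :
    ∃ (n : ℕ) (v : Fin n → V) (c : ∀ i : Fin n, G.Walk (v i) (v i)), (∀ i, (c i).IsCycle) ∧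
      (List.ofFn fun i => (c i).edges).flatten.Nodup ∧
      ∀ e, e ∈ G.edgeSet ↔ e ∈ (List.ofFn fun i => (c i).edges).flatten := by
  classical
  revert inst hdeg
  induction G using WellFoundedLT.induction with
  | _ G ih =>
  intro _ hdeg
  by_cases hG : G = ⊥
  · subst hG
    refine ⟨0, Fin.elim0, fun i => i.elim0, fun i => i.elim0, List.nodup_nil, fun e => ?_⟩
    simp
  obtain ⟨a, b, hab⟩ := ne_bot_iff_exists_adj.mp hG
  obtain ⟨u, c, hc⟩ := exists_isCycle_of_even_degree hdeg hab
  set G' := G.deleteEdges {e | e ∈ c.edges}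
  have hlt : G' < G := by
    refine (deleteEdges_le _).lt_of_ne fun h => ?_
    have hsnd := Walk.mk_start_snd_mem_edges hc.not_nil
    exact (deleteEdges_eq_self.mp h).notMem_of_mem_left (c.edges_subset_edgeSet hsnd) hsnd
  have hG' : ∀ e, e ∈ G'.edgeSet ↔ e ∈ G.edgeSet ∧ e ∉ c.edges := by simp [G']
  obtain ⟨n, v, c', hc', hnodup, hcover⟩ :=
    ih G' hlt fun v => (hc.isTrail.even_degree_deleteEdges_iff v).mpr (hdeg v)
  let w : Fin (n + 1) → V := Fin.cons u v
  let cw : ∀ i, G.Walk (w i) (w i) :=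
    Fin.cons (α := fun i => G.Walk (w i) (w i)) c fun i => (c' i).mapLe (deleteEdges_le _)
  have hedges : (List.ofFn fun i => (cw i).edges).flatten =
      c.edges ++ (List.ofFn fun i => (c' i).edges).flatten := by
    rw [List.ofFn_succ, List.flatten_cons]
    congr 1
    exact congrArg List.flatten <| congrArg List.ofFn <|
      funext fun i => Walk.edges_mapLe_eq_edges _ _
  refine ⟨n + 1, w, cw, Fin.cases hc fun i => (hc' i).mapLe _, ?_, ?_⟩
  · rw [hedges, List.nodup_append]
    exact ⟨hc.edges_nodup, hnodup,
      fun e he e' he' hee' => ((hG' e').mp ((hcover e').mpr he')).2 (hee' ▸ he)⟩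
  · intro e
    have := c.edges_subset_edgeSet (e := e)
    rw [hedges, List.mem_append, ← hcover, hG']
    tauto

end SimpleGraph

theorem veblen_even_degrees_iff_disjoint_cycle_decomposition
    {V : Type*} [Fintype V] (G : SimpleGraph V) [DecidableRel G.Adj] :
    (∀ v : V, Even (G.degree v)) ↔
      ∃ (n : ℕ) (v : Fin n → V) (c : ∀ i : Fin n, G.Walk (v i) (v i)),
        (∀ i, (c i).IsCycle) ∧
        (∀ i j, i ≠ j → ∀ e : Sym2 V, e ∈ (c i).edges → e ∉ (c j).edges) ∧
        (∀ e : Sym2 V, e ∈ G.edgeSet ↔ ∃ i, e ∈ (c i).edges) := by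
  have mem_flatten : ∀ {n : ℕ} {v : Fin n → V} (c : ∀ i, G.Walk (v i) (v i)) (e : Sym2 V),
      e ∈ (List.ofFn fun i => (c i).edges).flatten ↔ ∃ i, e ∈ (c i).edges := by
    simp
  constructor
  · intro hdeg
    obtain ⟨n, v, c, hc, hnodup, hcover⟩ := SimpleGraph.exists_isCycle_partition_of_even_degree hdeg
    exact ⟨n, v, c, hc, (List.nodup_flatten_ofFn.mp hnodup).2,
      fun e => (hcover e).trans (mem_flatten c e)⟩
  · rintro ⟨n, v, c, hc, hdisj, hcover⟩
    exact SimpleGraph.even_degree_of_isTrail_partition (fun i => (hc i).isTrail)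
      (List.nodup_flatten_ofFn.mpr ⟨fun i => (hc i).isTrail.edges_nodup, hdisj⟩)
      fun e => (hcover e).trans (mem_flatten c e).symm
end

section
/- Ore's theorem: let G be a finite simple graph on n ≥ 3 vertices such that deg(u) + deg(v) ≥ n for every pair of distinct non-adjacent vertices u and v. Then G is Hamiltonian. -/
/-!
Closure argument. If `deg u + deg v ≥ n` and `G ⊔ uv` is Hamiltonian, so is `G`: either the
Hamiltonian cycle avoids `uv`, or deleting `uv` from it leaves a Hamiltonian path
`u = x₀, …, xₙ₋₁ = v` in `G`. At least `deg u` of its `n - 1` edges `xᵢxᵢ₊₁` have `u ~ xᵢ₊₁`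
and at least `deg v` have `xᵢ ~ v`, so some edge has both, and
`u … xᵢ v … xᵢ₊₁ u` is a Hamiltonian cycle of `G`. Adding the missing edges one at a time
preserves Ore's condition and ends at the complete graph, which is Hamiltonian for `n ≥ 3`.
-/

open Finset

namespace SimpleGraph

variable {V : Type*} {G : SimpleGraph V}

namespace Walk

variable {u v x y : V}

theorem IsHamiltonian.of_perm_support {u' v' : V} [DecidableEq V] {H : SimpleGraph V}
    {p : G.Walk u v} {q : H.Walk u' v'} (hp : p.IsHamiltonian) (h : p.support.Perm q.support) :
    q.IsHamiltonian :=
  fun a => h.count_eq a ▸ hp a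

theorem IsHamiltonian.reverse [DecidableEq V] {p : G.Walk u v} (hp : p.IsHamiltonian) :
    p.reverse.IsHamiltonian :=
  hp.of_perm_support <| by rw [support_reverse]; exact (List.reverse_perm _).symm

theorem IsHamiltonian.transfer [DecidableEq V] {H : SimpleGraph V} {p : G.Walk u v}
    (hp : p.IsHamiltonian) (hH : ∀ e ∈ p.edges, e ∈ H.edgeSet) :
    (p.transfer H hH).IsHamiltonian :=
  hp.of_perm_support (.of_eq (support_transfer (p := p) hH).symm)

theorem IsHamiltonianCycle.transfer [Fintype V] [DecidableEq V] {H : SimpleGraph V} {c : G.Walk u u}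
    (hc : c.IsHamiltonianCycle) (hH : ∀ e ∈ c.edges, e ∈ H.edgeSet) :
    (c.transfer H hH).IsHamiltonianCycle :=
  isHamiltonianCycle_iff_isCycle_and_length_eq.mpr
    ⟨hc.isCycle.transfer hH, by rw [length_transfer, hc.length_eq]⟩

theorem IsHamiltonian.isHamiltonianCycle_cons [Fintype V] [DecidableEq V] {p : G.Walk u v}
    (hp : p.IsHamiltonian) (h : G.Adj v u) (hV : 3 ≤ Fintype.card V) :
    (cons h p).IsHamiltonianCycle := by
  have hlen := hp.length_eq
  refine isHamiltonianCycle_iff_isCycle_and_length_eq.mpr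
    ⟨(cons_isCycle_iff p h).mpr ⟨hp.isPath, fun he => ?_⟩, by rw [length_cons]; omega⟩
  have := hp.isPath.length_eq_one_of_mem_edges (Sym2.eq_swap ▸ he)
  omega

theorem exists_eq_append_cons_of_mem_darts {p : G.Walk u v} {d : G.Dart} (hd : d ∈ p.darts) :
    ∃ (q : G.Walk u d.fst) (r : G.Walk d.snd v), p = q.append (cons d.adj r) := by
  induction p with
  | nil => simp at hd
  | cons h p ih =>
    rcases List.mem_cons.mp hd with rfl | hd
    · exact ⟨nil, p, rfl⟩
    · obtain ⟨q, r, rfl⟩ := ih hd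
      exact ⟨cons h q, r, rfl⟩

theorem IsHamiltonianCycle.isHamiltonian_append [DecidableEq V] {q : G.Walk u x}
    {r : G.Walk y u} {h : G.Adj x y} (hc : (q.append (cons h r)).IsHamiltonianCycle) :
    (r.append q).IsHamiltonian := by
  refine hc.isHamiltonian_tail.of_perm_support ?_
  rw [support_tail_of_not_nil _ hc.not_nil, support_append, support_append, support_cons,
    List.tail_cons, ← q.cons_tail_support, List.cons_append, List.tail_cons]
  exact List.perm_append_comm

theorem IsHamiltonianCycle.exists_isHamiltonian_of_mem_edges [DecidableEq V] {c : G.Walk x x}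
    (hc : c.IsHamiltonianCycle) (he : s(u, v) ∈ c.edges) :
    ∃ p : G.Walk u v, p.IsHamiltonian := by
  obtain ⟨⟨⟨a, b⟩, _⟩, hd, hde⟩ := List.mem_map.mp he
  obtain ⟨q, r, rfl⟩ := exists_eq_append_cons_of_mem_darts hd
  have hp := hc.isHamiltonian_append
  rcases Sym2.eq_iff.mp hde with ⟨rfl, rfl⟩ | ⟨rfl, rfl⟩
  · exact ⟨_, hp.reverse⟩
  · exact ⟨_, hp⟩

theorem exists_mem_darts_snd_eq {w : V} {p : G.Walk u v} (hw : w ∈ p.support) (hwu : w ≠ u) :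
    ∃ d ∈ p.darts, d.snd = w := by
  rw [← p.cons_tail_support, List.mem_cons, or_iff_right hwu, ← map_snd_darts] at hw
  exact List.mem_map.mp hw

theorem exists_mem_darts_fst_eq {w : V} {p : G.Walk u v} (hw : w ∈ p.support) (hwv : w ≠ v) :
    ∃ d ∈ p.darts, d.fst = w := by
  rw [← map_fst_darts_append, List.mem_append, List.mem_singleton, or_iff_left hwv] at hw
  exact List.mem_map.mp hw

theorem IsHamiltonian.exists_mem_darts_adj_adj [Fintype V] [DecidableEq V] [DecidableRel G.Adj]
    {p : G.Walk u v} (hp : p.IsHamiltonian) (hdeg : Fintype.card V ≤ G.degree u + G.degree v) :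
    ∃ d ∈ p.darts, G.Adj u d.snd ∧ G.Adj d.fst v := by
  set S := p.darts.toFinset
  have hS : #S = Fintype.card V - 1 := by
    rw [List.toFinset_card_of_nodup (darts_nodup_of_support_nodup hp.isPath.support_nodup),
      length_darts, hp.length_eq]
  have hA : G.degree u ≤ #(S.filter fun d => G.Adj u d.snd) := by
    rw [← card_neighborFinset_eq_degree]
    refine card_le_card_of_surjOn (·.snd) fun w hw => ?_
    have hw : G.Adj u w := by simpa using hw
    obtain ⟨d, hd, rfl⟩ := exists_mem_darts_snd_eq (hp.mem_support w) hw.ne'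
    exact ⟨d, by simpa [S] using ⟨hd, hw⟩, rfl⟩
  have hB : G.degree v ≤ #(S.filter fun d => G.Adj d.fst v) := by
    rw [← card_neighborFinset_eq_degree]
    refine card_le_card_of_surjOn (·.fst) fun w hw => ?_
    have hw : G.Adj v w := by simpa using hw
    obtain ⟨d, hd, rfl⟩ := exists_mem_darts_fst_eq (hp.mem_support w) hw.ne'
    exact ⟨d, by simpa [S] using ⟨hd, hw.symm⟩, rfl⟩
  have hV : 0 < Fintype.card V := Fintype.card_pos_iff.mpr ⟨u⟩
  obtain ⟨d, hd⟩ := inter_nonempty_of_card_lt_card_add_card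
    (filter_subset (fun d => G.Adj u d.snd) S) (filter_subset (fun d => G.Adj d.fst v) S) (by omega)
  simp only [mem_inter, mem_filter, List.mem_toFinset, S] at hd
  exact ⟨d, hd.1.1, hd.1.2, hd.2.2⟩

theorem IsHamiltonian.reverse_append_cons [DecidableEq V] {q : G.Walk u x} {r : G.Walk y v}
    {hd : G.Adj x y} (hp : (q.append (cons hd r)).IsHamiltonian) (h : G.Adj y u) :
    (r.reverse.append (cons h q)).IsHamiltonian := by
  refine hp.of_perm_support ?_
  rw [support_append, support_append, support_cons, support_cons, List.tail_cons,
    List.tail_cons, support_reverse]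
  exact List.perm_append_comm.trans ((List.reverse_perm _).symm.append_right _)

theorem IsHamiltonian.isHamiltonian_of_card_le_degree_add_degree [Fintype V] [DecidableEq V]
    [DecidableRel G.Adj] {p : G.Walk u v} (hp : p.IsHamiltonian) (hV : 3 ≤ Fintype.card V)
    (hdeg : Fintype.card V ≤ G.degree u + G.degree v) : G.IsHamiltonian := by
  obtain ⟨d, hd, hud, hdv⟩ := hp.exists_mem_darts_adj_adj hdeg
  obtain ⟨q, r, rfl⟩ := exists_eq_append_cons_of_mem_darts hd
  exact fun _ => ⟨_, _, (hp.reverse_append_cons hud.symm).isHamiltonianCycle_cons hdv hV⟩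

end Walk

theorem mem_edgeSet_sup_edge {u v : V} {e : Sym2 V} (he : e ∈ (G ⊔ edge u v).edgeSet) :
    e ∈ G.edgeSet ∨ e = s(u, v) := by
  rw [edgeSet_sup] at he
  exact he.imp_right fun h => edgeSet_edge_subset h

theorem Walk.IsPath.mem_edgeSet_of_mem_edges_sup_edge {u v : V} {p : (G ⊔ edge u v).Walk u v}
    (hp : p.IsPath) (hl : p.length ≠ 1) : ∀ e ∈ p.edges, e ∈ G.edgeSet := by
  intro e he
  refine (mem_edgeSet_sup_edge (p.edges_subset_edgeSet he)).resolve_right ?_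
  rintro rfl
  exact hl (hp.length_eq_one_of_mem_edges he)

theorem isHamiltonian_top [Fintype V] [DecidableEq V] (hV : 3 ≤ Fintype.card V) :
    (⊤ : SimpleGraph V).IsHamiltonian := by
  have hne : (univ : Finset V).toList ≠ [] := by
    rw [Ne, toList_eq_nil, univ_eq_empty_iff, not_isEmpty_iff, ← Fintype.card_pos_iff]
    omega
  let p := Walk.ofSupport (G := ⊤) _ hne ((nodup_toList univ).isChain.imp fun _ _ => id)
  have hp : p.IsHamiltonian :=
    (Walk.IsPath.mk' (by simp [p, nodup_toList])).isHamiltonian_of_mem (by simp [p])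
  exact hp.isHamiltonian_of_card_le_degree_add_degree hV (by simp [complete_graph_degree]; omega)

theorem isHamiltonian_of_isHamiltonian_sup_edge [Fintype V] [DecidableEq V] [DecidableRel G.Adj]
    {u v : V} (hV : 3 ≤ Fintype.card V) (hdeg : Fintype.card V ≤ G.degree u + G.degree v)
    (hG : (G ⊔ edge u v).IsHamiltonian) : G.IsHamiltonian := by
  obtain ⟨a, c, hc⟩ := hG (by omega)
  by_cases hcG : ∀ e ∈ c.edges, e ∈ G.edgeSet
  · exact fun _ => ⟨a, _, hc.transfer hcG⟩
  obtain ⟨e, he, heG⟩ := not_forall₂.mp hcG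
  obtain rfl := (mem_edgeSet_sup_edge (c.edges_subset_edgeSet he)).resolve_left heG
  obtain ⟨p, hp⟩ := hc.exists_isHamiltonian_of_mem_edges he
  have hl : p.length ≠ 1 := by rw [hp.length_eq]; omega
  exact (hp.transfer (hp.isPath.mem_edgeSet_of_mem_edges_sup_edge hl)
    ).isHamiltonian_of_card_le_degree_add_degree hV hdeg

end SimpleGraph

open SimpleGraph

theorem ore_theorem
    {V : Type*} [Fintype V] [DecidableEq V] (G : SimpleGraph V) [DecidableRel G.Adj]
    (hn : 3 ≤ Fintype.card V)
    (h : ∀ u v : V, u ≠ v → ¬ G.Adj u v → Fintype.card V ≤ G.degree u + G.degree v) :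
    G.IsHamiltonian := by
  rename_i instAdj
  induction G using WellFoundedGT.induction generalizing instAdj with
  | _ G ih =>
  by_cases hcomplete : ∀ u v : V, u ≠ v → G.Adj u v
  · obtain rfl : G = ⊤ := eq_top_iff.mpr hcomplete
    exact isHamiltonian_top hn
  obtain ⟨u, v, huv, hnadj⟩ : ∃ u v, u ≠ v ∧ ¬G.Adj u v := by simpa using hcomplete
  refine isHamiltonian_of_isHamiltonian_sup_edge hn (h u v huv hnadj)
    (ih _ (G.lt_sup_edge u v huv hnadj) fun x y hxy hnadj' => ?_)
  exact (h x y hxy fun hxy' => hnadj' (le_sup_left (a := G) hxy')).trans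
    (add_le_add (degree_le_of_le le_sup_left) (degree_le_of_le le_sup_left))
end

section
/- If a finite simple graph G is Hamiltonian, then for every set S of vertices such that the induced subgraph of G on the complement of S is disconnected (has at least two connected components), the number of connected components of that induced subgraph is at most |S|. (Thus every Hamiltonian graph is 1-tough.) -/
/-!
Following a Hamiltonian cycle defines a cyclic permutation `σ` of the vertices with every `v`
adjacent to `σ v`. A component `C` of `G - S` cannot be closed under `σ`: the `σ`-orbit of any
vertex is everything, so `C` would contain every vertex outside `S`, leaving no second component.
Hence `C` has a vertex `v` with `σ v ∈ S`, and `C ↦ σ v` is injective because `σ` is.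
-/

open Equiv

namespace SimpleGraph

variable {V : Type*} {G : SimpleGraph V}

lemma Walk.adj_getVert_mod_length {u : V} (p : G.Walk u u) {k : ℕ} (hk : k < p.length) :
    G.Adj (p.getVert k) (p.getVert ((k + 1) % p.length)) := by
  have hadj := p.adj_getVert_succ hk
  rcases Nat.lt_or_ge (k + 1) p.length with hlt | hge
  · rwa [Nat.mod_eq_of_lt hlt]
  · rw [show k + 1 = p.length by omega, p.getVert_length] at hadj
    rwa [show k + 1 = p.length by omega, Nat.mod_self, p.getVert_zero]

lemma Walk.adj_formPerm_support_dropLast [DecidableEq V] {u : V} (p : G.Walk u u)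
    (hp : p.support.dropLast.Nodup) {v : V} (hv : v ∈ p.support.dropLast) :
    G.Adj v (p.support.dropLast.formPerm v) := by
  obtain ⟨k, hk, rfl⟩ := List.getElem_of_mem hv
  have hlen : p.support.dropLast.length = p.length := by simp
  rw [List.formPerm_apply_getElem _ hp]
  simp only [List.getElem_dropLast, Walk.support_getElem_eq_getVert, hlen]
  exact p.adj_getVert_mod_length (hlen ▸ hk)

lemma Walk.IsHamiltonianCycle.exists_perm_adj_sameCycle [DecidableEq V] {u : V} {p : G.Walk u u}
    (hp : p.IsHamiltonianCycle) :
    ∃ σ : Perm V, (∀ v, G.Adj v (σ v)) ∧ ∀ x y, σ.SameCycle x y := by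
  set l := p.support.dropLast
  have hnodup : l.Nodup := hp.isCycle.nodup_dropLast_support
  have hmem (v : V) : v ∈ l :=
    p.tail_support_perm_dropLast_support.mem_iff.mp
      (p.support_tail_of_not_nil hp.isCycle.not_nil ▸ hp.isHamiltonian_tail.mem_support v)
  have hlen : 2 ≤ l.length := by
    have := hp.isCycle.three_le_length
    simp only [l, List.length_dropLast, Walk.length_support]
    omega
  have hmoved (v : V) : l.formPerm v ≠ v :=
    (List.formPerm_apply_mem_ne_self_iff _ hnodup _ (hmem v)).mpr hlen
  exact ⟨l.formPerm, fun v => p.adj_formPerm_support_dropLast hnodup (hmem v),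
    fun x y => (List.isCycle_formPerm hnodup hlen).sameCycle (hmoved x) (hmoved y)⟩

section CyclicPerm

variable [Finite V] {σ : Perm V}

lemma ConnectedComponent.exists_perm_apply_notMem (hadj : ∀ v, G.Adj v (σ v))
    (hσ : ∀ x y, σ.SameCycle x y) {t : Set V}
    [Nontrivial (G.induce t).ConnectedComponent] (C : (G.induce t).ConnectedComponent) :
    ∃ v : t, (G.induce t).connectedComponentMk v = C ∧ σ v ∉ t := by
  by_contra! hclosed
  have hmaps : Set.MapsTo σ (Subtype.val '' C.supp) (Subtype.val '' C.supp) := by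
    rintro _ ⟨v, hv, rfl⟩
    refine ⟨⟨σ v, hclosed v hv⟩, ?_, rfl⟩
    exact (ConnectedComponent.connectedComponentMk_eq_of_adj (induce_adj.mpr (hadj v).symm)).trans
      ((C.mem_supp_iff v).mp hv)
  obtain ⟨v, hv⟩ := C.exists_rep
  have hall (w : t) : (G.induce t).connectedComponentMk w = C := by
    obtain ⟨k, hk⟩ := (hσ v w).exists_nat_pow_eq
    obtain ⟨w', hw', hw'w⟩ := hmaps.iterate k ⟨v, hv, rfl⟩
    rw [← Perm.coe_pow, hk] at hw'w
    rwa [← Subtype.ext hw'w]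
  obtain ⟨C', hC'⟩ := exists_ne C
  exact hC' (C'.ind hall)

theorem card_connectedComponent_induce_compl_le (hadj : ∀ v, G.Adj v (σ v))
    (hσ : ∀ x y, σ.SameCycle x y) (s : Set V)
    [Nontrivial (G.induce sᶜ).ConnectedComponent] :
    Nat.card (G.induce sᶜ).ConnectedComponent ≤ Nat.card s := by
  choose v hv hvs using ConnectedComponent.exists_perm_apply_notMem hadj hσ (t := sᶜ)
  refine Nat.card_le_card_of_injective (fun C => ⟨σ (v C), not_not.mp (hvs C)⟩) fun C C' h => ?_
  rw [← hv C, ← hv C', Subtype.ext (σ.injective (congrArg Subtype.val h))]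

end CyclicPerm

end SimpleGraph

open SimpleGraph

theorem hamiltonian_is_one_tough
    {V : Type*} [Fintype V] [DecidableEq V] (G : SimpleGraph V) (hG : G.IsHamiltonian)
    (S : Finset V)
    (hdisc : 2 ≤ Nat.card ((G.induce ((↑S : Set V)ᶜ)).ConnectedComponent)) :
    Nat.card ((G.induce ((↑S : Set V)ᶜ)).ConnectedComponent) ≤ S.card := by
  have : Nontrivial (G.induce ((↑S : Set V)ᶜ)).ConnectedComponent :=
    Finite.one_lt_card_iff_nontrivial.mp hdisc
  have hcard : Fintype.card V ≠ 1 := fun h => by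
    have := Fintype.card_le_one_iff_subsingleton.mp h.le
    have := Finite.card_le_one_iff_subsingleton.mpr
      (inferInstance : Subsingleton (G.induce ((↑S : Set V)ᶜ)).ConnectedComponent)
    omega
  obtain ⟨_, p, hp⟩ := hG hcard
  obtain ⟨σ, hadj, hσ⟩ := hp.exists_perm_adj_sameCycle
  simpa using card_connectedComponent_induce_compl_le hadj hσ (S : Set V)
end

section
/- Caro–Wei bound: every finite simple graph G contains an independent set I with |I| ≥ ∑_{v ∈ V(G)} 1/(1 + deg(v)), the inequality holding in the real numbers. -/
/-!
Greedy argument: take a vertex `v` of minimum degree in the current vertex set `s`, put it into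
the independent set and delete `v` together with its neighbours. Each deleted vertex `u` has
degree at least `deg v`, so the deleted vertices carry total weight `∑ 1 / (1 + deg u) ≤ 1`,
which is paid for by `v`; deleting vertices only lowers the degrees, hence raises the weights,
of the vertices that remain.
-/

open Finset

namespace Finset

theorem sum_one_div_le_one_of_card_le {α : Type*} {t : Finset α} {f : α → ℝ}
    (h : ∀ u ∈ t, (#t : ℝ) ≤ f u) : ∑ u ∈ t, 1 / f u ≤ 1 := by
  rcases t.eq_empty_or_nonempty with rfl | ht
  · simp
  have hcard : (0 : ℝ) < #t := by exact_mod_cast ht.card_pos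
  calc ∑ u ∈ t, 1 / f u ≤ ∑ _u ∈ t, 1 / (#t : ℝ) :=
        sum_le_sum fun u hu => one_div_le_one_div_of_le hcard (h u hu)
    _ = 1 := by rw [sum_const, nsmul_eq_mul]; field_simp

end Finset

namespace SimpleGraph

variable {V : Type*} (G : SimpleGraph V) [DecidableRel G.Adj]

def degreeIn (s : Finset V) (v : V) : ℕ := #{u ∈ s | G.Adj v u}

variable {G}

theorem degreeIn_mono {s t : Finset V} (h : s ⊆ t) (v : V) : G.degreeIn s v ≤ G.degreeIn t v :=
  card_le_card (filter_subset_filter _ h)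

theorem degreeIn_univ [Fintype V] (v : V) : G.degreeIn univ v = G.degree v := by
  rw [degreeIn, ← card_neighborFinset_eq_degree, neighborFinset_eq_filter]

theorem card_filter_eq_or_adj_le [DecidableEq V] (s : Finset V) (v : V) :
    #{u ∈ s | u = v ∨ G.Adj v u} ≤ 1 + G.degreeIn s v := by
  rw [filter_or, degreeIn]
  refine (card_union_le _ _).trans (Nat.add_le_add_right ?_ _)
  exact card_le_one.mpr fun a ha b hb => (mem_filter.mp ha).2.trans (mem_filter.mp hb).2.symm

theorem exists_isIndepSet_subset_sum_le [DecidableEq V] (s : Finset V) :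
    ∃ I ⊆ s, G.IsIndepSet (I : Set V) ∧
      ∑ v ∈ s, (1 : ℝ) / (1 + G.degreeIn s v) ≤ #I := by
  induction s using Finset.strongInduction with
  | _ s ih =>
  rcases s.eq_empty_or_nonempty with rfl | hs
  · exact ⟨∅, subset_rfl, by simp, by simp⟩
  obtain ⟨v, hvs, hvmin⟩ := s.exists_min_image (G.degreeIn s) hs
  set rest := {u ∈ s | ¬(u = v ∨ G.Adj v u)}
  have hrest_ssub : rest ⊂ s :=
    filter_ssubset.mpr ⟨v, hvs, by simp⟩
  obtain ⟨I, hIrest, hIind, hIsum⟩ := ih rest hrest_ssub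
  have hvI : v ∉ I := fun h => by simpa using (mem_filter.mp (hIrest h)).2
  refine ⟨insert v I, insert_subset hvs (hIrest.trans (filter_subset _ _)), ?_, ?_⟩
  · rw [coe_insert]
    refine hIind.insert fun u hu _ => ?_
    have hvu : ¬G.Adj v u := fun h => (mem_filter.mp (hIrest hu)).2 (.inr h)
    exact ⟨hvu, fun h => hvu h.symm⟩
  · have hnbhd : ∑ u ∈ s with u = v ∨ G.Adj v u, (1 : ℝ) / (1 + G.degreeIn s u) ≤ 1 :=
      sum_one_div_le_one_of_card_le fun u hu => by
        have := (card_filter_eq_or_adj_le s v).trans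
          (Nat.add_le_add_left (hvmin u (mem_filter.mp hu).1) 1)
        exact_mod_cast this
    have hrest_le : ∑ u ∈ rest, (1 : ℝ) / (1 + G.degreeIn s u)
        ≤ ∑ u ∈ rest, (1 : ℝ) / (1 + G.degreeIn rest u) :=
      sum_le_sum fun u _ => one_div_le_one_div_of_le (by positivity)
        (by exact_mod_cast Nat.add_le_add_left (degreeIn_mono (filter_subset _ _) u) 1)
    rw [← sum_filter_add_sum_filter_not s (fun u => u = v ∨ G.Adj v u), card_insert_of_notMem hvI]
    push_cast
    linarith

end SimpleGraph

theorem caro_wei_bound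
    {V : Type*} [Fintype V] (G : SimpleGraph V) [DecidableRel G.Adj] :
    ∃ I : Finset V, (∀ u ∈ I, ∀ v ∈ I, ¬ G.Adj u v) ∧
      (∑ v : V, (1 : ℝ) / (1 + G.degree v)) ≤ I.card := by
  classical
  obtain ⟨I, -, hind, hsum⟩ := G.exists_isIndepSet_subset_sum_le univ
  refine ⟨I, fun u hu w hw hadj => hind hu hw hadj.ne hadj, ?_⟩
  simpa only [SimpleGraph.degreeIn_univ] using hsum
end

section
/- König–Egerváry theorem: in every finite bipartite simple graph G, the minimum size of a vertex cover of G equals the maximum size of a matching of G. -/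
open Finset

set_option linter.unusedSectionVars false
set_option maxHeartbeats 1000000

section KonigAux

variable {V : Type*} [Fintype V] [DecidableEq V]

/-- Easy direction: any matching is at most as large as any vertex cover. -/
lemma konig_matching_le_cover (G : SimpleGraph V) (s : Finset V)
    (hs : ∀ u v : V, G.Adj u v → u ∈ s ∨ v ∈ s)
    (M : Finset (Sym2 V)) (hM1 : ∀ e ∈ M, e ∈ G.edgeSet)
    (hM2 : ∀ e ∈ M, ∀ f ∈ M, e ≠ f → ∀ v : V, v ∈ e → v ∉ f) :
    M.card ≤ s.card := by
  classical
  rcases M.eq_empty_or_nonempty with rfl | ⟨e0, he0⟩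
  · simp
  have hV : Nonempty V := by
    induction e0 using Sym2.ind with
    | _ x y => exact ⟨x⟩
  inhabit V
  have hch : ∀ e ∈ M, ∃ v, v ∈ s ∧ v ∈ e := by
    intro e he
    induction e using Sym2.ind with
    | _ x y =>
      have hadj : G.Adj x y := (SimpleGraph.mem_edgeSet G).mp (hM1 _ he)
      rcases hs x y hadj with h | h
      · exact ⟨x, h, by simp [Sym2.mem_iff]⟩
      · exact ⟨y, h, by simp [Sym2.mem_iff]⟩
  set F : Sym2 V → V := fun e => if h : ∃ v, v ∈ s ∧ v ∈ e then h.choose else default with hF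
  apply Finset.card_le_card_of_injOn F
  · intro e he
    have h := hch e he
    simp only [hF]
    rw [dif_pos h]
    exact h.choose_spec.1
  · intro e he f hf hef
    by_contra hne
    have h1 := hch e he
    have h2 := hch f hf
    have hFe : F e ∈ e := by simp only [hF]; rw [dif_pos h1]; exact h1.choose_spec.2
    have hFf : F f ∈ f := by simp only [hF]; rw [dif_pos h2]; exact h2.choose_spec.2
    exact hM2 e he f hf hne (F e) hFe (hef ▸ hFf)

/-- Hall's condition holds from each color class of a minimum vertex cover. -/
lemma konig_hall_side (G : SimpleGraph V) [DecidableRel G.Adj]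
    (c : V → Fin 2) (hc : ∀ u v, G.Adj u v → c u ≠ c v)
    (C : Finset V) (hC : ∀ u v, G.Adj u v → u ∈ C ∨ v ∈ C)
    (hmin : ∀ D : Finset V, (∀ u v, G.Adj u v → u ∈ D ∨ v ∈ D) → C.card ≤ D.card)
    (i : Fin 2) :
    ∃ f : {x // x ∈ C.filter (fun v => c v = i)} → V, Function.Injective f ∧
      ∀ a, f a ∈ G.neighborFinset a.1 \ C := by
  classical
  set S := C.filter (fun v => c v = i) with hS
  set t : {x // x ∈ S} → Finset V := fun a => G.neighborFinset a.1 \ C with ht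
  rw [← Finset.all_card_le_biUnion_card_iff_exists_injective t]
  intro s
  by_contra hcon
  push_neg at hcon
  set s' : Finset V := s.image Subtype.val with hs'
  have hs'card : s'.card = s.card := Finset.card_image_of_injective _ Subtype.val_injective
  have hs'S : s' ⊆ S := by
    intro x hx
    obtain ⟨a, _, rfl⟩ := Finset.mem_image.mp hx
    exact a.2
  have hs'C : s' ⊆ C := hs'S.trans (Finset.filter_subset _ _)
  set D : Finset V := (C \ s') ∪ s.biUnion t with hD
  have hkey : ∀ u v, G.Adj u v → u ∈ C → u ∈ D ∨ v ∈ D := by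
    intro u v huv hu
    by_cases hus : u ∈ s'
    · have hui : c u = i := (Finset.mem_filter.mp (hs'S hus)).2
      by_cases hvC : v ∈ C
      · right
        apply Finset.mem_union_left
        rw [Finset.mem_sdiff]
        refine ⟨hvC, fun hvs => ?_⟩
        have : c v = i := (Finset.mem_filter.mp (hs'S hvs)).2
        exact hc u v huv (by rw [hui, this])
      · right
        apply Finset.mem_union_right
        obtain ⟨a, has, hav⟩ := Finset.mem_image.mp hus
        refine Finset.mem_biUnion.mpr ⟨a, has, ?_⟩
        rw [ht, Finset.mem_sdiff, SimpleGraph.mem_neighborFinset, hav]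
        exact ⟨huv, hvC⟩
    · left
      exact Finset.mem_union_left _ (Finset.mem_sdiff.mpr ⟨hu, hus⟩)
  have hDcov : ∀ u v, G.Adj u v → u ∈ D ∨ v ∈ D := by
    intro u v huv
    rcases hC u v huv with hu | hv
    · exact hkey u v huv hu
    · exact (hkey v u huv.symm hv).symm
  have hle := hmin D hDcov
  have hDcard : D.card ≤ (C \ s').card + (s.biUnion t).card := Finset.card_union_le _ _
  have hsd : (C \ s').card = C.card - s'.card := Finset.card_sdiff_of_subset hs'C
  have hsle : s'.card ≤ C.card := Finset.card_le_card hs'C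
  omega

/-- From a minimum vertex cover, build a matching of the same size. -/
lemma konig_exists_matching (G : SimpleGraph V) [DecidableRel G.Adj]
    (c : V → Fin 2) (hc : ∀ u v, G.Adj u v → c u ≠ c v)
    (C : Finset V) (hC : ∀ u v, G.Adj u v → u ∈ C ∨ v ∈ C)
    (hmin : ∀ D : Finset V, (∀ u v, G.Adj u v → u ∈ D ∨ v ∈ D) → C.card ≤ D.card) :
    ∃ M : Finset (Sym2 V), (∀ e ∈ M, e ∈ G.edgeSet) ∧
      (∀ e ∈ M, ∀ f ∈ M, e ≠ f → ∀ v : V, v ∈ e → v ∉ f) ∧ M.card = C.card := by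
  classical
  obtain ⟨f, hfinj, hf⟩ := konig_hall_side G c hc C hC hmin 0
  obtain ⟨g, hginj, hg⟩ := konig_hall_side G c hc C hC hmin 1
  have fin2 : ∀ x : Fin 2, x ≠ 0 → x = 1 := by decide
  have fin2' : ∀ x : Fin 2, x ≠ 1 → x = 0 := by decide
  have hfadj : ∀ a, G.Adj a.1 (f a) := fun a =>
    (SimpleGraph.mem_neighborFinset G _ _).mp (Finset.mem_sdiff.mp (hf a)).1
  have hfC : ∀ a, f a ∉ C := fun a => (Finset.mem_sdiff.mp (hf a)).2
  have hgadj : ∀ b, G.Adj b.1 (g b) := fun b =>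
    (SimpleGraph.mem_neighborFinset G _ _).mp (Finset.mem_sdiff.mp (hg b)).1
  have hgC : ∀ b, g b ∉ C := fun b => (Finset.mem_sdiff.mp (hg b)).2
  have haC : ∀ a : {x // x ∈ C.filter (fun v => c v = 0)}, a.1 ∈ C := fun a =>
    (Finset.mem_filter.mp a.2).1
  have hbC : ∀ b : {x // x ∈ C.filter (fun v => c v = 1)}, b.1 ∈ C := fun b =>
    (Finset.mem_filter.mp b.2).1
  have hac : ∀ a : {x // x ∈ C.filter (fun v => c v = 0)}, c a.1 = 0 := fun a =>
    (Finset.mem_filter.mp a.2).2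
  have hbc : ∀ b : {x // x ∈ C.filter (fun v => c v = 1)}, c b.1 = 1 := fun b =>
    (Finset.mem_filter.mp b.2).2
  have hfc : ∀ a, c (f a) = 1 := by
    intro a
    refine fin2 _ fun h => hc _ _ (hfadj a) ?_
    rw [hac a, h]
  have hgc : ∀ b, c (g b) = 0 := by
    intro b
    refine fin2' _ fun h => hc _ _ (hgadj b) ?_
    rw [hbc b, h]
  have hFAinj : Function.Injective (fun a => s(a.1, f a)) := by
    intro a b h
    rw [Sym2.eq_iff] at h
    rcases h with ⟨h1, _⟩ | ⟨h1, _⟩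
    · exact Subtype.ext h1
    · exact absurd (h1 ▸ haC a) (hfC b)
  have hFBinj : Function.Injective (fun b => s(b.1, g b)) := by
    intro a b h
    rw [Sym2.eq_iff] at h
    rcases h with ⟨h1, _⟩ | ⟨h1, _⟩
    · exact Subtype.ext h1
    · exact absurd (h1 ▸ hbC a) (hgC b)
  refine ⟨Finset.univ.image (fun a => s(a.1, f a)) ∪
          Finset.univ.image (fun b => s(b.1, g b)), ?_, ?_, ?_⟩
  · intro e he
    rcases Finset.mem_union.mp he with he | he
    · obtain ⟨a, -, rfl⟩ := Finset.mem_image.mp he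
      exact (SimpleGraph.mem_edgeSet G).mpr (hfadj a)
    · obtain ⟨b, -, rfl⟩ := Finset.mem_image.mp he
      exact (SimpleGraph.mem_edgeSet G).mpr (hgadj b)
  · intro e he e' he' hne v hve hve'
    rcases Finset.mem_union.mp he with he | he <;>
      rcases Finset.mem_union.mp he' with he' | he'
    · obtain ⟨a, -, rfl⟩ := Finset.mem_image.mp he
      obtain ⟨a', -, rfl⟩ := Finset.mem_image.mp he'
      simp only [Sym2.mem_iff] at hve hve'
      rcases hve with rfl | rfl <;> rcases hve' with h | h
      · exact hne (congrArg (fun a => s(a.1, f a)) (Subtype.ext h))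
      · exact hfC a' (h ▸ haC a)
      · exact hfC a (h.symm ▸ haC a')
      · exact hne (congrArg (fun a => s(a.1, f a)) (hfinj h))
    · obtain ⟨a, -, rfl⟩ := Finset.mem_image.mp he
      obtain ⟨b, -, rfl⟩ := Finset.mem_image.mp he'
      simp only [Sym2.mem_iff] at hve hve'
      rcases hve with rfl | rfl <;> rcases hve' with h | h
      · have h0 := hac a
        rw [h, hbc b] at h0
        exact absurd h0 (by decide)
      · exact hgC b (h ▸ haC a)
      · exact hfC a (h.symm ▸ hbC b)
      · have h0 := hfc a
        rw [h, hgc b] at h0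
        exact absurd h0 (by decide)
    · obtain ⟨b, -, rfl⟩ := Finset.mem_image.mp he
      obtain ⟨a, -, rfl⟩ := Finset.mem_image.mp he'
      simp only [Sym2.mem_iff] at hve hve'
      rcases hve with rfl | rfl <;> rcases hve' with h | h
      · have h0 := hbc b
        rw [h, hac a] at h0
        exact absurd h0 (by decide)
      · exact hfC a (h ▸ hbC b)
      · exact hgC b (h.symm ▸ haC a)
      · have h0 := hgc b
        rw [h, hfc a] at h0
        exact absurd h0 (by decide)
    · obtain ⟨b, -, rfl⟩ := Finset.mem_image.mp he
      obtain ⟨b', -, rfl⟩ := Finset.mem_image.mp he'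
      simp only [Sym2.mem_iff] at hve hve'
      rcases hve with rfl | rfl <;> rcases hve' with h | h
      · exact hne (congrArg (fun b => s(b.1, g b)) (Subtype.ext h))
      · exact hgC b' (h ▸ hbC b)
      · exact hgC b (h.symm ▸ hbC b')
      · exact hne (congrArg (fun b => s(b.1, g b)) (hginj h))
  · have hdisj : Disjoint (Finset.univ.image (fun a => s(a.1, f a)))
        (Finset.univ.image (fun b => s(b.1, g b))) := by
      rw [Finset.disjoint_left]
      intro e heA heB
      obtain ⟨a, -, rfl⟩ := Finset.mem_image.mp heA
      obtain ⟨b, -, hba⟩ := Finset.mem_image.mp heB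
      rw [Sym2.eq_iff] at hba
      rcases hba with ⟨h1, _⟩ | ⟨h1, _⟩
      · have h0 := hbc b
        rw [h1, hac a] at h0
        exact absurd h0 (by decide)
      · exact absurd (h1 ▸ hbC b) (hfC a)
    rw [Finset.card_union_of_disjoint hdisj,
      Finset.card_image_of_injective _ hFAinj,
      Finset.card_image_of_injective _ hFBinj,
      Finset.card_univ, Finset.card_univ, Fintype.card_coe, Fintype.card_coe]
    have hsplit := Finset.card_filter_add_card_filter_not
      (s := C) (p := fun v => c v = 0)
    have hfilt : C.filter (fun v => ¬ c v = 0) = C.filter (fun v => c v = 1) :=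
      Finset.filter_congr fun v _ => ⟨fun h => fin2 _ h, fun h => by rw [h]; decide⟩
    rw [hfilt] at hsplit
    exact hsplit

end KonigAux

theorem konig_egervary_theorem
    {V : Type*} [Fintype V] (G : SimpleGraph V) (hbip : G.Colorable 2) :
    sInf {n : ℕ | ∃ s : Finset V, (∀ u v : V, G.Adj u v → u ∈ s ∨ v ∈ s) ∧ s.card = n}
      = sSup {n : ℕ | ∃ M : Finset (Sym2 V), (∀ e ∈ M, e ∈ G.edgeSet) ∧
          (∀ e ∈ M, ∀ f ∈ M, e ≠ f → ∀ v : V, v ∈ e → v ∉ f) ∧ M.card = n} := by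
  classical
  obtain ⟨co⟩ := hbip
  have hc : ∀ u v, G.Adj u v → co u ≠ co v := fun u v h => co.valid h
  set S1 := {n : ℕ | ∃ s : Finset V, (∀ u v : V, G.Adj u v → u ∈ s ∨ v ∈ s) ∧ s.card = n}
    with hS1
  set S2 := {n : ℕ | ∃ M : Finset (Sym2 V), (∀ e ∈ M, e ∈ G.edgeSet) ∧
      (∀ e ∈ M, ∀ f ∈ M, e ≠ f → ∀ v : V, v ∈ e → v ∉ f) ∧ M.card = n} with hS2
  have hS1ne : S1.Nonempty :=
    ⟨Fintype.card V, Finset.univ, fun u _ _ => Or.inl (Finset.mem_univ u), Finset.card_univ⟩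
  obtain ⟨C, hCcov, hCcard⟩ := Nat.sInf_mem hS1ne
  have hmin : ∀ D : Finset V, (∀ u v, G.Adj u v → u ∈ D ∨ v ∈ D) → C.card ≤ D.card := by
    intro D hD
    rw [hCcard]
    exact Nat.sInf_le ⟨D, hD, rfl⟩
  obtain ⟨M, hM1, hM2, hMcard⟩ := konig_exists_matching G (⇑co) hc C hCcov hmin
  have hbdd : BddAbove S2 := by
    refine ⟨Fintype.card (Sym2 V), ?_⟩
    rintro n ⟨M', -, -, rfl⟩
    exact le_trans (Finset.card_le_univ M') (le_of_eq Finset.card_univ)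
  have hS2ne : S2.Nonempty := ⟨0, ∅, by simp, by simp, rfl⟩
  apply le_antisymm
  · rw [← hCcard]
    exact hMcard ▸ le_csSup hbdd ⟨M, hM1, hM2, hMcard.symm ▸ rfl⟩
  · obtain ⟨M', hM'1, hM'2, hM'card⟩ := Nat.sSup_mem hS2ne hbdd
    rw [← hM'card, ← hCcard]
    exact konig_matching_le_cover G C hCcov M' hM'1 hM'2
end

section
/- Tutte–Berge formula: for every finite simple graph G on vertex set V, |V| − 2·α'(G) = max_{S ⊆ V} (o(G − S) − |S|), where α'(G) is the maximum size of a matching of G and o(G − S) denotes the number of connected components of the induced subgraph of G on V ∖ S that have an odd number of vertices. -/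
set_option linter.unusedSectionVars false

namespace TB
open Finset

variable {V : Type*} [Fintype V] [DecidableEq V]

/-- `M` is a matching of `G` with support inside `A`. -/
def IsMat (G : SimpleGraph V) (A : Finset V) (M : Finset (Sym2 V)) : Prop :=
  (∀ e ∈ M, e ∈ G.edgeSet) ∧
  (∀ e ∈ M, ∀ f ∈ M, e ≠ f → ∀ v : V, v ∈ e → v ∉ f) ∧
  (∀ e ∈ M, ∀ v ∈ e, v ∈ A)

noncomputable def nu (G : SimpleGraph V) (A : Finset V) : ℕ :=
  sSup {n : ℕ | ∃ M, IsMat G A M ∧ M.card = n}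

def eF (e : Sym2 V) : Finset V := univ.filter (· ∈ e)

def suppF (M : Finset (Sym2 V)) : Finset V := univ.filter (fun v => ∃ e ∈ M, v ∈ e)

lemma mem_suppF {M : Finset (Sym2 V)} {v : V} : v ∈ suppF M ↔ ∃ e ∈ M, v ∈ e := by
  simp [suppF]

lemma eF_card {G : SimpleGraph V} {e : Sym2 V} (he : e ∈ G.edgeSet) : (eF e).card = 2 := by
  induction e with
  | _ a b =>
    have hab : a ≠ b := (G.mem_edgeSet.mp he).ne
    have : eF s(a, b) = {a, b} := by
      ext v; simp [eF, Sym2.mem_iff]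
    rw [this, card_insert_of_notMem (by simp [hab]), card_singleton]

lemma suppF_card {G : SimpleGraph V} {A : Finset V} {M : Finset (Sym2 V)}
    (hM : IsMat G A M) : (suppF M).card = 2 * M.card := by
  have h1 : suppF M = M.biUnion eF := by
    ext v; simp [suppF, eF]
  rw [h1, card_biUnion, Finset.sum_congr rfl (fun e he => eF_card (hM.1 e he)),
    Finset.sum_const, smul_eq_mul, mul_comm]
  intro e he f hf hef
  simp only [disjoint_left, eF, mem_filter, mem_univ, true_and]
  intro v hv
  exact hM.2.1 e he f hf hef v hv

lemma suppF_subset {G : SimpleGraph V} {A : Finset V} {M : Finset (Sym2 V)}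
    (hM : IsMat G A M) : suppF M ⊆ A := by
  intro v hv
  obtain ⟨e, he, hve⟩ := mem_suppF.mp hv
  exact hM.2.2 e he v hve

lemma bddAbove_matSet (G : SimpleGraph V) (A : Finset V) :
    BddAbove {n : ℕ | ∃ M, IsMat G A M ∧ M.card = n} := by
  refine ⟨Fintype.card (Sym2 V), ?_⟩
  rintro n ⟨M, _, rfl⟩
  exact card_le_univ M

lemma matSet_nonempty (G : SimpleGraph V) (A : Finset V) :
    {n : ℕ | ∃ M, IsMat G A M ∧ M.card = n}.Nonempty :=
  ⟨0, ∅, ⟨by simp, by simp, by simp⟩, rfl⟩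

lemma exists_max_mat (G : SimpleGraph V) (A : Finset V) :
    ∃ M, IsMat G A M ∧ M.card = nu G A :=
  Nat.sSup_mem (matSet_nonempty G A) (bddAbove_matSet G A)

lemma card_le_nu {G : SimpleGraph V} {A : Finset V} {M : Finset (Sym2 V)}
    (hM : IsMat G A M) : M.card ≤ nu G A :=
  le_csSup (bddAbove_matSet G A) ⟨M, hM, rfl⟩

lemma two_nu_le (G : SimpleGraph V) (A : Finset V) : 2 * nu G A ≤ A.card := by
  obtain ⟨M, hM, hcard⟩ := exists_max_mat G A
  rw [← hcard, ← suppF_card hM]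
  exact card_le_card (suppF_subset hM)

/-- Vertices of `A` unmatched by `M`. -/
def UMF (A : Finset V) (M : Finset (Sym2 V)) : Finset V :=
  A.filter (fun v => ∀ e ∈ M, v ∉ e)

lemma mem_UMF {A : Finset V} {M : Finset (Sym2 V)} {v : V} :
    v ∈ UMF A M ↔ v ∈ A ∧ ∀ e ∈ M, v ∉ e := by simp [UMF]

lemma UMF_card {G : SimpleGraph V} {A : Finset V} {M : Finset (Sym2 V)}
    (hM : IsMat G A M) : A.card = 2 * M.card + (UMF A M).card := by
  classical
  have hsplit := Finset.card_filter_add_card_filter_not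
    (s := A) (p := fun v => ∃ e ∈ M, v ∈ e)
  have h1 : A.filter (fun v => ∃ e ∈ M, v ∈ e) = suppF M := by
    ext v
    simp only [mem_filter, mem_suppF]
    constructor
    · rintro ⟨_, h⟩; exact h
    · intro h; exact ⟨suppF_subset hM (mem_suppF.mpr h), h⟩
  have h2 : A.filter (fun v => ¬ ∃ e ∈ M, v ∈ e) = UMF A M := by
    ext v; simp [UMF]
  rw [h1, h2, suppF_card hM] at hsplit
  omega


lemma no_adj_free {G : SimpleGraph V} {A : Finset V} {M : Finset (Sym2 V)}
    (hM : IsMat G A M) (hmax : M.card = nu G A)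
    {x y : V} (hx : x ∈ UMF A M) (hy : y ∈ UMF A M) : ¬ G.Adj x y := by
  intro hadj
  obtain ⟨hxA, hxf⟩ := mem_UMF.mp hx
  obtain ⟨hyA, hyf⟩ := mem_UMF.mp hy
  have hnotmem : s(x, y) ∉ M := fun h => hxf _ h (Sym2.mem_mk_left x y)
  have hdisj : ∀ v : V, v ∈ s(x, y) → ∀ f ∈ M, v ∉ f := by
    intro v hv f hf
    rcases Sym2.mem_iff.mp hv with rfl | rfl
    · exact hxf _ hf
    · exact hyf _ hf
  have hmat : IsMat G A (insert s(x, y) M) := by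
    refine ⟨?_, ?_, ?_⟩
    · intro e he
      rcases mem_insert.mp he with rfl | he
      · exact G.mem_edgeSet.mpr hadj
      · exact hM.1 e he
    · intro e he f hf hef v hve hvf
      rcases mem_insert.mp he with rfl | he
      · rcases mem_insert.mp hf with rfl | hf
        · exact hef rfl
        · exact hdisj v hve f hf hvf
      · rcases mem_insert.mp hf with rfl | hf
        · exact hdisj v hvf e he hve
        · exact hM.2.1 e he f hf hef v hve hvf
    · intro e he v hv
      rcases mem_insert.mp he with rfl | he
      · rcases Sym2.mem_iff.mp hv with rfl | rfl
        · exact hxA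
        · exact hyA
      · exact hM.2.2 e he v hv
  have := card_le_nu hmat
  rw [card_insert_of_notMem hnotmem, hmax] at this
  omega

lemma isMat_subset {G : SimpleGraph V} {A : Finset V} {M N : Finset (Sym2 V)}
    (hM : IsMat G A M) (h : N ⊆ M) : IsMat G A N :=
  ⟨fun e he => hM.1 e (h he), fun e he f hf => hM.2.1 e (h he) f (h hf),
    fun e he => hM.2.2 e (h he)⟩

lemma gallai_aux {G : SimpleGraph V} {A : Finset V}
    (hyp : ∀ v ∈ A, ∃ N, IsMat G A N ∧ N.card = nu G A ∧ v ∈ UMF A N) :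
    ∀ (d : ℕ) (M : Finset (Sym2 V)), IsMat G A M → M.card = nu G A →
      ∀ u v : ((A : Set V) : Type _), (u : V) ∈ UMF A M → (v : V) ∈ UMF A M → u ≠ v →
      (G.induce (A : Set V)).Reachable u v → (G.induce (A : Set V)).dist u v = d → False := by
  intro d
  induction d using Nat.strong_induction_on with
  | _ d IH =>
  intro M hM hmax u v hu hv hne hr hd
  have hd0 : d ≠ 0 := by
    have := hr.pos_dist_of_ne hne; omega
  have hd1 : d ≠ 1 := by
    intro h1
    have hadj : (G.induce (A : Set V)).Adj u v :=
      SimpleGraph.dist_eq_one_iff_adj.mp (hd.trans h1)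
    exact no_adj_free hM hmax hu hv hadj
  obtain ⟨p, hp⟩ := hr.exists_walk_length_eq_dist
  rw [hd] at hp
  cases p with
  | nil => simp at hp; omega
  | @cons _ t _ hadj_ut q =>
  rw [SimpleGraph.Walk.length_cons] at hp
  have hdut : (G.induce (A : Set V)).dist u t = 1 :=
    SimpleGraph.dist_eq_one_iff_adj.mpr hadj_ut
  have htA : (t : V) ∈ A := t.2
  have htv : t ≠ v := by
    rintro rfl
    have := SimpleGraph.dist_le hadj_ut.toWalk
    rw [hd] at this
    simp at this; omega
  have hdtv : (G.induce (A : Set V)).dist t v < d := by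
    have := SimpleGraph.dist_le q
    omega
  have htM : ¬ ((t : V) ∈ UMF A M) := fun htf =>
    IH 1 (by omega) M hM hmax u t hu htf hadj_ut.ne hadj_ut.reachable hdut
  -- choose N, a maximum matching missing t, maximizing |M ∩ N|
  set K : Set ℕ := {k | ∃ N, (IsMat G A N ∧ N.card = nu G A ∧ (t : V) ∈ UMF A N) ∧
      (M ∩ N).card = k} with hK
  have hKne : K.Nonempty := by
    obtain ⟨N, h1, h2, h3⟩ := hyp t htA
    exact ⟨(M ∩ N).card, N, ⟨h1, h2, h3⟩, rfl⟩
  have hKbdd : BddAbove K := by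
    refine ⟨M.card, ?_⟩
    rintro k ⟨N, _, rfl⟩
    exact card_le_card (inter_subset_left)
  obtain ⟨N, ⟨hN, hNcard, hNt⟩, hMN⟩ := Nat.sSup_mem hKne hKbdd
  have hNu : ¬ ((u : V) ∈ UMF A N) := fun h =>
    IH 1 (by omega) N hN hNcard u t h hNt hadj_ut.ne hadj_ut.reachable hdut
  have hNv : ¬ ((v : V) ∈ UMF A N) := fun h =>
    IH _ hdtv N hN hNcard t v hNt h htv q.reachable rfl
  -- counting: find x missed by N, matched by M, different from t
  have hcM := UMF_card hM
  have hcN := UMF_card hN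
  have hcards : (UMF A M).card = (UMF A N).card := by omega
  have huv : ({(u : V), (v : V)} : Finset V) ⊆ UMF A M \ UMF A N := by
    intro w hw
    rcases mem_insert.mp hw with rfl | hw
    · exact mem_sdiff.mpr ⟨hu, hNu⟩
    · rw [mem_singleton.mp hw]
      exact mem_sdiff.mpr ⟨hv, hNv⟩
  have huvcard : ({(u : V), (v : V)} : Finset V).card = 2 := by
    rw [card_insert_of_notMem (by simp [Subtype.coe_injective.ne hne]), card_singleton]
  have h2le : 2 ≤ (UMF A M \ UMF A N).card := huvcard ▸ card_le_card huv
  have hisdiff : 1 < (UMF A N \ UMF A M).card := by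
    have e1 := card_inter_add_card_sdiff (UMF A M) (UMF A N)
    have e2 := card_inter_add_card_sdiff (UMF A N) (UMF A M)
    rw [inter_comm] at e2
    omega
  obtain ⟨x, hxmem, hxt⟩ := Finset.exists_mem_ne hisdiff (t : V)
  obtain ⟨hxN, hxM⟩ := mem_sdiff.mp hxmem
  have hxA : x ∈ A := (mem_UMF.mp hxN).1
  have hxmatched : ∃ e ∈ M, x ∈ e := by
    by_contra hc; push_neg at hc
    exact hxM (mem_UMF.mpr ⟨hxA, hc⟩)
  obtain ⟨e, heM, hxe⟩ := hxmatched
  obtain ⟨y, rfl⟩ : ∃ y, e = s(x, y) := (Sym2.mem_iff_exists).mp hxe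
  have hGxy : G.Adj x y := G.mem_edgeSet.mp (hM.1 _ heM)
  have hyA : y ∈ A := hM.2.2 _ heM y (Sym2.mem_mk_right x y)
  by_cases hyN : y ∈ UMF A N
  · exact no_adj_free hN hNcard hxN hyN hGxy
  -- y is matched by N via f = s(y, z)
  have hymatched : ∃ f ∈ N, y ∈ f := by
    by_contra hc; push_neg at hc
    exact hyN (mem_UMF.mpr ⟨hyA, hc⟩)
  obtain ⟨f, hfN, hyf⟩ := hymatched
  have hxfree : ∀ g ∈ N, x ∉ g := (mem_UMF.mp hxN).2
  have htfree : ∀ g ∈ N, (t : V) ∉ g := (mem_UMF.mp hNt).2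
  have hfM : f ∉ M := by
    intro hfM
    rcases eq_or_ne f s(x, y) with rfl | hne'
    · exact hxfree _ hfN (Sym2.mem_mk_left x y)
    · exact hM.2.1 f hfM s(x,y) heM hne' y hyf (Sym2.mem_mk_right x y)
  have htx : (t : V) ≠ x := fun h => hxt h.symm
  have hty : (t : V) ≠ y := fun h => htfree f hfN (h ▸ hyf)
  have hsxyN : s(x, y) ∉ N := fun h => hxfree _ h (Sym2.mem_mk_left x y)
  -- the swapped matching N'
  set N' : Finset (Sym2 V) := insert s(x, y) (N.erase f) with hN'def
  have hN' : IsMat G A N' := by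
    refine ⟨?_, ?_, ?_⟩
    · intro g hg
      rcases mem_insert.mp hg with rfl | hg
      · exact hM.1 _ heM
      · exact hN.1 _ (mem_of_mem_erase hg)
    · have key : ∀ w : V, w ∈ s(x, y) → ∀ g ∈ N.erase f, w ∉ g := by
        intro w hw g hg
        obtain ⟨hgf, hgN⟩ := mem_erase.mp hg
        rcases Sym2.mem_iff.mp hw with rfl | rfl
        · exact hxfree _ hgN
        · exact fun hyg => hN.2.1 f hfN g hgN (Ne.symm hgf) w hyf hyg
      intro g hg g' hg' hgg' w hwg hwg'
      rcases mem_insert.mp hg with rfl | hg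
      · rcases mem_insert.mp hg' with rfl | hg'
        · exact hgg' rfl
        · exact key w hwg g' hg' hwg'
      · rcases mem_insert.mp hg' with rfl | hg'
        · exact key w hwg' g hg hwg
        · exact hN.2.1 g (mem_of_mem_erase hg) g' (mem_of_mem_erase hg')
            hgg' w hwg hwg'
    · intro g hg w hw
      rcases mem_insert.mp hg with rfl | hg
      · rcases Sym2.mem_iff.mp hw with rfl | rfl
        · exact hxA
        · exact hyA
      · exact hN.2.2 _ (mem_of_mem_erase hg) w hw
  have hN'card : N'.card = nu G A := by
    rw [hN'def, card_insert_of_notMem (fun h => hsxyN (mem_of_mem_erase h)),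
      card_erase_of_mem hfN]
    have : 1 ≤ N.card := card_pos.mpr ⟨f, hfN⟩
    omega
  have hN't : (t : V) ∈ UMF A N' := by
    refine mem_UMF.mpr ⟨htA, ?_⟩
    intro g hg
    rcases mem_insert.mp hg with rfl | hg
    · intro hmem
      rcases Sym2.mem_iff.mp hmem with h | h
      · exact htx h
      · exact hty h
    · exact htfree _ (mem_of_mem_erase hg)
  have hsub : insert s(x, y) (M ∩ N) ⊆ M ∩ N' := by
    intro g hg
    rcases mem_insert.mp hg with rfl | hg
    · exact mem_inter.mpr ⟨heM, mem_insert_self _ _⟩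
    · obtain ⟨hgM, hgN⟩ := mem_inter.mp hg
      have hgf : g ≠ f := fun h => hfM (h ▸ hgM)
      exact mem_inter.mpr ⟨hgM, mem_insert_of_mem (mem_erase.mpr ⟨hgf, hgN⟩)⟩
  have hbigger : (M ∩ N).card + 1 ≤ (M ∩ N').card := by
    have hnm : s(x, y) ∉ M ∩ N := fun h => hsxyN (mem_inter.mp h).2
    calc (M ∩ N).card + 1 = (insert s(x,y) (M ∩ N)).card :=
          (card_insert_of_notMem hnm).symm
      _ ≤ (M ∩ N').card := card_le_card hsub
  have hle : (M ∩ N').card ≤ sSup K :=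
    le_csSup hKbdd ⟨N', ⟨hN', hN'card, hN't⟩, rfl⟩
  omega

/-! ### Component bookkeeping -/

noncomputable def cF (G : SimpleGraph V) (B : Set V)
    (c : (G.induce B).ConnectedComponent) : Finset V :=
  (Set.toFinite {v : V | ∃ h : v ∈ B, (G.induce B).connectedComponentMk ⟨v, h⟩ = c}).toFinset

lemma mem_cF {G : SimpleGraph V} {B : Set V} {c : (G.induce B).ConnectedComponent} {v : V} :
    v ∈ cF G B c ↔ ∃ h : v ∈ B, (G.induce B).connectedComponentMk ⟨v, h⟩ = c := by
  simp [cF]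

lemma cF_unique {G : SimpleGraph V} {B : Set V} {c c' : (G.induce B).ConnectedComponent}
    {v : V} (h : v ∈ cF G B c) (h' : v ∈ cF G B c') : c = c' := by
  obtain ⟨hB, hc⟩ := mem_cF.mp h
  obtain ⟨hB', hc'⟩ := mem_cF.mp h'
  exact hc ▸ hc' ▸ rfl

lemma card_supp_cF {G : SimpleGraph V} {B : Set V} (c : (G.induce B).ConnectedComponent) :
    Nat.card c.supp = (cF G B c).card := by
  have e : c.supp ≃ {v : V // v ∈ cF G B c} :=
    { toFun := fun x => ⟨(x : ↥B), mem_cF.mpr ⟨(x : ↥B).2,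
        (SimpleGraph.ConnectedComponent.mem_supp_iff _ _).mp x.2⟩⟩
      invFun := fun w => ⟨⟨w.1, (mem_cF.mp w.2).choose⟩,
        (SimpleGraph.ConnectedComponent.mem_supp_iff _ _).mpr (mem_cF.mp w.2).choose_spec⟩
      left_inv := fun x => by ext; rfl
      right_inv := fun w => by ext; rfl }
  rw [Nat.card_congr e, Nat.card_eq_finsetCard]

lemma cF_closed {G : SimpleGraph V} {B : Set V} {c : (G.induce B).ConnectedComponent}
    {x y : V} (hadj : G.Adj x y) (hx : x ∈ cF G B c) (hy : y ∈ B) : y ∈ cF G B c := by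
  obtain ⟨hB, hc⟩ := mem_cF.mp hx
  refine mem_cF.mpr ⟨hy, ?_⟩
  rw [← hc]
  exact SimpleGraph.ConnectedComponent.sound
    (SimpleGraph.Adj.reachable (by simpa using hadj.symm))

/-- The parity lemma: if every matching edge touching the component stays inside `B`,
then the parity of the component equals the parity of its set of unmatched vertices. -/
lemma odd_cF_iff {G : SimpleGraph V} {A : Finset V} {M : Finset (Sym2 V)}
    (hM : IsMat G A M) {B : Set V} (c : (G.induce B).ConnectedComponent)
    (hclosed : ∀ e ∈ M, ∀ x, x ∈ e → x ∈ cF G B c → ∀ y, y ∈ e → y ∈ B) :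
    (Odd (cF G B c).card ↔ Odd ((cF G B c).filter (fun v => ∀ e ∈ M, v ∉ e)).card) := by
  classical
  set Mc := M.filter (fun e => ∀ v ∈ e, v ∈ cF G B c) with hMcdef
  have hMc : IsMat G A Mc := isMat_subset hM (filter_subset _ _)
  have hsupp : (cF G B c).filter (fun v => ∃ e ∈ M, v ∈ e) = suppF Mc := by
    ext v
    simp only [mem_filter, mem_suppF, hMcdef]
    constructor
    · rintro ⟨hvc, e, heM, hve⟩
      refine ⟨e, ⟨heM, ?_⟩, hve⟩
      intro w hwe
      rcases eq_or_ne w v with rfl | hwv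
      · exact hvc
      · obtain ⟨b, rfl⟩ := Sym2.mem_iff_exists.mp hve
        have hwb : w = b := by
          rcases Sym2.mem_iff.mp hwe with h | h
          · exact absurd h hwv
          · exact h
        subst hwb
        exact cF_closed (G.mem_edgeSet.mp (hM.1 _ heM)) hvc
          (hclosed _ heM v (Sym2.mem_mk_left _ _) hvc w hwe)
    · rintro ⟨e, heMc, hve⟩
      obtain ⟨heM, hall⟩ := heMc
      exact ⟨hall v hve, e, heM, hve⟩
  have heven : Even (suppF Mc).card := by
    rw [suppF_card hMc]; exact ⟨Mc.card, two_mul _⟩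
  have hsplit := Finset.card_filter_add_card_filter_not
    (s := cF G B c) (p := fun v => ∃ e ∈ M, v ∈ e)
  have hneg : (cF G B c).filter (fun v => ¬ ∃ e ∈ M, v ∈ e)
      = (cF G B c).filter (fun v => ∀ e ∈ M, v ∉ e) := by
    apply filter_congr; intro v _; push_neg; rfl
  rw [hsupp, hneg] at hsplit
  obtain ⟨k, hk⟩ := heven
  rw [Nat.odd_iff, Nat.odd_iff]
  omega

/-- Gallai's lemma, counting form. -/
lemma gallai_count {G : SimpleGraph V} {A : Finset V}
    (hyp : ∀ v ∈ A, ∃ N, IsMat G A N ∧ N.card = nu G A ∧ v ∈ UMF A N) :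
    Nat.card {c : (G.induce (A : Set V)).ConnectedComponent // Odd (Nat.card c.supp)}
      + 2 * nu G A = A.card := by
  classical
  obtain ⟨M, hM, hmax⟩ := exists_max_mat G A
  have key : ∀ (x y : V), x ∈ UMF A M → y ∈ UMF A M → ∀ (hxA : x ∈ (A : Set V))
      (hyA : y ∈ (A : Set V)),
      (G.induce (A : Set V)).connectedComponentMk ⟨x, hxA⟩
        = (G.induce (A : Set V)).connectedComponentMk ⟨y, hyA⟩ → x = y := by
    intro x y hx hy hxA hyA hcc
    by_contra hne
    have hne' : (⟨x, hxA⟩ : ↥(A : Set V)) ≠ ⟨y, hyA⟩ := fun h => hne (congrArg Subtype.val h)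
    exact gallai_aux hyp _ M hM hmax ⟨x, hxA⟩ ⟨y, hyA⟩ hx hy hne'
      (SimpleGraph.ConnectedComponent.exact hcc) rfl
  set Fr : (G.induce (A : Set V)).ConnectedComponent → Finset V :=
    fun c => (cF G (A : Set V) c).filter (fun v => ∀ e ∈ M, v ∉ e) with hFrdef
  have hFr_odd : ∀ c, Odd (Nat.card c.supp) ↔ Odd (Fr c).card := by
    intro c
    rw [card_supp_cF c]
    exact odd_cF_iff hM c (fun e he x _ _ y hy => hM.2.2 e he y hy)
  have hFr_le : ∀ c, (Fr c).card ≤ 1 := by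
    intro c
    refine card_le_one.mpr ?_
    intro a ha b hb
    obtain ⟨hac, haf⟩ := mem_filter.mp ha
    obtain ⟨hbc, hbf⟩ := mem_filter.mp hb
    obtain ⟨haB, hac'⟩ := mem_cF.mp hac
    obtain ⟨hbB, hbc'⟩ := mem_cF.mp hbc
    exact key a b (mem_UMF.mpr ⟨haB, haf⟩) (mem_UMF.mpr ⟨hbB, hbf⟩) haB hbB
      (hac'.trans hbc'.symm)
  have hFr_eq_one : ∀ c, Odd (Nat.card c.supp) ↔ (Fr c).card = 1 := by
    intro c
    rw [hFr_odd c]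
    constructor
    · intro h
      have := hFr_le c
      rcases Nat.odd_iff.mp h with h1
      omega
    · intro h; rw [h]; exact odd_one
  -- the bijection
  have hofmem : ∀ v : V, v ∈ UMF A M → v ∈ (A : Set V) :=
    fun v hv => Finset.mem_coe.mpr (mem_UMF.mp hv).1
  set f : {v : V // v ∈ UMF A M} →
      {c : (G.induce (A : Set V)).ConnectedComponent // Odd (Nat.card c.supp)} :=
    fun v => ⟨(G.induce (A : Set V)).connectedComponentMk ⟨v.1, hofmem v.1 v.2⟩, by
      refine (hFr_eq_one _).mpr ?_
      have hvmem : v.1 ∈ Fr ((G.induce (A : Set V)).connectedComponentMk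
          ⟨v.1, hofmem v.1 v.2⟩) :=
        mem_filter.mpr ⟨mem_cF.mpr ⟨hofmem v.1 v.2, rfl⟩, (mem_UMF.mp v.2).2⟩
      have h1 : 1 ≤ (Fr _).card := card_pos.mpr ⟨v.1, hvmem⟩
      have := hFr_le ((G.induce (A : Set V)).connectedComponentMk ⟨v.1, hofmem v.1 v.2⟩)
      omega⟩ with hfdef
  have hinj : Function.Injective f := by
    intro a b hab
    have := congrArg Subtype.val hab
    simp only [hfdef] at this
    exact Subtype.ext (key a.1 b.1 a.2 b.2 _ _ this)
  have hsurj : Function.Surjective f := by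
    rintro ⟨c, hc⟩
    have h1 : (Fr c).card = 1 := (hFr_eq_one c).mp hc
    obtain ⟨v, hv⟩ := card_pos.mp (by omega : 0 < (Fr c).card)
    obtain ⟨hvc, hvf⟩ := mem_filter.mp hv
    obtain ⟨hvB, hvc'⟩ := mem_cF.mp hvc
    refine ⟨⟨v, mem_UMF.mpr ⟨hvB, hvf⟩⟩, ?_⟩
    exact Subtype.ext hvc'
  have hcard : Nat.card {c : (G.induce (A : Set V)).ConnectedComponent //
      Odd (Nat.card c.supp)} = (UMF A M).card := by
    rw [← Nat.card_congr (Equiv.ofBijective f ⟨hinj, hsurj⟩),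
      Nat.card_eq_finsetCard]
  have := UMF_card hM
  omega


/-- Easy direction: the number of odd components of `G - S` is at most the number
of unmatched vertices plus `|S|`. -/
lemma easy_bound {G : SimpleGraph V} {M : Finset (Sym2 V)}
    (hM : IsMat G univ M) (S : Finset V) :
    Nat.card {c : (G.induce ((S : Set V)ᶜ)).ConnectedComponent // Odd (Nat.card c.supp)}
      ≤ (UMF univ M).card + S.card := by
  classical
  set B : Set V := ((S : Set V)ᶜ) with hBdef
  have claim : ∀ c : (G.induce B).ConnectedComponent, Odd (Nat.card c.supp) →
      ∃ w, (w ∈ UMF univ M ∧ w ∈ cF G B c) ∨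
        (w ∈ S ∧ ∃ e ∈ M, w ∈ e ∧ ∃ x, x ∈ e ∧ x ∈ cF G B c ∧ x ≠ w) := by
    intro c hc
    by_contra hno
    push_neg at hno
    have hclosed : ∀ e ∈ M, ∀ x, x ∈ e → x ∈ cF G B c → ∀ y, y ∈ e → y ∈ B := by
      intro e he x hx hxc y hy
      by_contra hyB
      have hyS : y ∈ S := by
        have : y ∈ (S : Set V) := by
          by_contra h
          exact hyB (Set.mem_compl h)
        exact this
      have hxB : x ∈ B := (mem_cF.mp hxc).1
      have hxy : x ≠ y := fun h => hyB (h ▸ hxB)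
      exact hxy ((hno y).2 hyS e he hy x hx hxc)
    have hodd := (odd_cF_iff hM c hclosed).mp (by rwa [card_supp_cF] at hc)
    have hempty : (cF G B c).filter (fun v => ∀ e ∈ M, v ∉ e) = ∅ := by
      rw [eq_empty_iff_forall_notMem]
      intro v hv
      obtain ⟨hvc, hvf⟩ := mem_filter.mp hv
      exact (hno v).1 (mem_UMF.mpr ⟨mem_univ v, hvf⟩) hvc
    rw [hempty] at hodd
    simp at hodd
  set g : {c : (G.induce B).ConnectedComponent // Odd (Nat.card c.supp)} →
      {w : V // w ∈ UMF univ M ∪ S} :=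
    fun c => ⟨(claim c.1 c.2).choose, by
      rcases (claim c.1 c.2).choose_spec with h | h
      · exact mem_union_left _ h.1
      · exact mem_union_right _ h.1⟩ with hgdef
  have hginj : Function.Injective g := by
    intro a b hab
    have hval : (claim a.1 a.2).choose = (claim b.1 b.2).choose :=
      congrArg Subtype.val hab
    have hcc : a.1 = b.1 := by
      have ha := (claim a.1 a.2).choose_spec
      have hb := (claim b.1 b.2).choose_spec
      rw [← hval] at hb
      rcases ha with ha | ha <;> rcases hb with hb | hb
      · exact cF_unique ha.2 hb.2
      · obtain ⟨hbS, e, he, hwe, rest⟩ := hb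
        exact absurd hwe ((mem_UMF.mp ha.1).2 _ he)
      · obtain ⟨haS, e, he, hwe, rest⟩ := ha
        exact absurd hwe ((mem_UMF.mp hb.1).2 _ he)
      · obtain ⟨haS, e, he, hwe, x, hxe, hxc, hxw⟩ := ha
        obtain ⟨hbS, e', he', hwe', x', hx'e, hx'c, hx'w⟩ := hb
        have hee : e = e' := by
          by_contra hne
          exact hM.2.1 e he e' he' hne _ hwe hwe'
        subst hee
        obtain ⟨bb, rfl⟩ := Sym2.mem_iff_exists.mp hwe
        have hx : x = bb := by
          rcases Sym2.mem_iff.mp hxe with h | h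
          · exact absurd h hxw
          · exact h
        have hx' : x' = bb := by
          rcases Sym2.mem_iff.mp hx'e with h | h
          · exact absurd h hx'w
          · exact h
        exact cF_unique hxc (hx.trans hx'.symm ▸ hx'c)
    exact Subtype.ext hcc
  calc Nat.card {c : (G.induce B).ConnectedComponent // Odd (Nat.card c.supp)}
      ≤ Nat.card {w : V // w ∈ UMF univ M ∪ S} :=
        Nat.card_le_card_of_injective g hginj
    _ = (UMF univ M ∪ S).card := Nat.card_eq_finsetCard _
    _ ≤ (UMF univ M).card + S.card := card_union_le _ _

/-- Hard direction, by strong induction on the size of the ambient vertex set `A`. -/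
lemma hard (G : SimpleGraph V) :
    ∀ (k : ℕ) (A : Finset V), A.card = k → ∃ S ⊆ A,
      Nat.card {c : (G.induce ((A \ S : Finset V) : Set V)).ConnectedComponent //
        Odd (Nat.card c.supp)} + 2 * nu G A = A.card + S.card := by
  intro k
  induction k using Nat.strong_induction_on with
  | _ k IH =>
  intro A hA
  by_cases hcase : ∀ v ∈ A, ∃ N, IsMat G A N ∧ N.card = nu G A ∧ v ∈ UMF A N
  · refine ⟨∅, empty_subset _, ?_⟩
    rw [sdiff_empty, card_empty, Nat.add_zero]
    exact gallai_count hcase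
  · push_neg at hcase
    obtain ⟨v, hvA, hv⟩ := hcase
    have hnuer : nu G (A.erase v) + 1 = nu G A := by
      obtain ⟨M, hM, hmax⟩ := exists_max_mat G A
      have hvM : ∃ e ∈ M, v ∈ e := by
        by_contra hc; push_neg at hc
        exact hv M hM hmax (mem_UMF.mpr ⟨hvA, hc⟩)
      obtain ⟨e, heM, hve⟩ := hvM
      have hM' : IsMat G (A.erase v) (M.erase e) := by
        refine ⟨fun g hg => hM.1 g (mem_of_mem_erase hg),
          fun g hg g' hg' => hM.2.1 g (mem_of_mem_erase hg) g' (mem_of_mem_erase hg'), ?_⟩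
        intro g hg w hw
        obtain ⟨hge, hgM⟩ := mem_erase.mp hg
        refine mem_erase.mpr ⟨?_, hM.2.2 g hgM w hw⟩
        rintro rfl
        exact hM.2.1 g hgM e heM hge _ hw hve
      have h1 : M.card - 1 ≤ nu G (A.erase v) := by
        have := card_le_nu hM'
        rwa [card_erase_of_mem heM] at this
      have hMpos : 1 ≤ M.card := card_pos.mpr ⟨e, heM⟩
      have h3 : nu G (A.erase v) + 1 ≤ nu G A := by
        obtain ⟨M', hM'2, hc'⟩ := exists_max_mat G (A.erase v)
        have hMA : IsMat G A M' := ⟨hM'2.1, hM'2.2.1,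
          fun g hg w hw => mem_of_mem_erase (hM'2.2.2 g hg w hw)⟩
        have hle := card_le_nu hMA
        have hne : M'.card ≠ nu G A := by
          intro h
          apply hv M' hMA h
          refine mem_UMF.mpr ⟨hvA, ?_⟩
          intro g hg hvg
          exact (mem_erase.mp (hM'2.2.2 g hg v hvg)).1 rfl
        omega
      omega
    have hkpos : 0 < k := hA ▸ card_pos.mpr ⟨v, hvA⟩
    have hcarder : (A.erase v).card = k - 1 := by
      rw [card_erase_of_mem hvA, hA]
    obtain ⟨S', hS'sub, hS'⟩ := IH (k - 1) (by omega) (A.erase v) hcarder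
    refine ⟨insert v S', insert_subset hvA (hS'sub.trans (erase_subset _ _)), ?_⟩
    have hsd : A \ insert v S' = A.erase v \ S' := by
      ext x
      simp only [mem_sdiff, mem_erase, mem_insert, not_or]
      tauto
    rw [hsd, card_insert_of_notMem (fun h => (mem_erase.mp (hS'sub h)).1 rfl)]
    rw [hcarder] at hS'
    omega

end TB

theorem tutte_berge_formula
    {V : Type*} [Fintype V] [DecidableEq V] (G : SimpleGraph V) :
    Fintype.card V
      - 2 * sSup {n : ℕ | ∃ M : Finset (Sym2 V), (∀ e ∈ M, e ∈ G.edgeSet) ∧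
          (∀ e ∈ M, ∀ f ∈ M, e ≠ f → ∀ v : V, v ∈ e → v ∉ f) ∧ M.card = n}
      = sSup {n : ℕ | ∃ S : Finset V,
          n = Nat.card {c : (G.induce ((↑S : Set V)ᶜ)).ConnectedComponent //
                Odd (Nat.card c.supp)} - S.card} := by
  classical
  open Finset in
  have hnu : {n : ℕ | ∃ M : Finset (Sym2 V), (∀ e ∈ M, e ∈ G.edgeSet) ∧
      (∀ e ∈ M, ∀ f ∈ M, e ≠ f → ∀ v : V, v ∈ e → v ∉ f) ∧ M.card = n}
      = {n : ℕ | ∃ M, TB.IsMat G univ M ∧ M.card = n} := by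
    ext n
    constructor
    · rintro ⟨M, h1, h2, h3⟩
      exact ⟨M, ⟨h1, h2, fun e _ w _ => mem_univ w⟩, h3⟩
    · rintro ⟨M, ⟨h1, h2, _⟩, h3⟩
      exact ⟨M, h1, h2, h3⟩
  rw [hnu, show sSup {n : ℕ | ∃ M, TB.IsMat G univ M ∧ M.card = n} = TB.nu G univ from rfl]
  have hcu : (univ : Finset V).card = Fintype.card V := Finset.card_univ
  obtain ⟨Mx, hMx, hMxc⟩ := TB.exists_max_mat G (univ : Finset V)
  have hUMc := TB.UMF_card hMx
  rw [hMxc, hcu] at hUMc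
  have hbound : ∀ n ∈ {n : ℕ | ∃ S : Finset V,
      n = Nat.card {c : (G.induce ((↑S : Set V)ᶜ)).ConnectedComponent //
        Odd (Nat.card c.supp)} - S.card},
      n ≤ Fintype.card V - 2 * TB.nu G univ := by
    rintro n ⟨S, rfl⟩
    have := TB.easy_bound hMx S
    omega
  have hne : {n : ℕ | ∃ S : Finset V,
      n = Nat.card {c : (G.induce ((↑S : Set V)ᶜ)).ConnectedComponent //
        Odd (Nat.card c.supp)} - S.card}.Nonempty :=
    ⟨_, ⟨(∅ : Finset V), rfl⟩⟩
  apply le_antisymm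
  · obtain ⟨S, hSsub, hS⟩ := TB.hard G (Fintype.card V) univ hcu
    have hset : ((univ \ S : Finset V) : Set V) = ((↑S : Set V)ᶜ) := by
      rw [Finset.coe_sdiff, Finset.coe_univ]
      exact (Set.compl_eq_univ_diff _).symm
    rw [hset] at hS
    have h2nu := TB.two_nu_le G (univ : Finset V)
    refine le_csSup ⟨Fintype.card V - 2 * TB.nu G univ, hbound⟩ ⟨S, ?_⟩
    omega
  · exact csSup_le hne hbound
end

section
/- Gallai's edge identity: for every finite simple graph G on vertex set V with no isolated vertices (every vertex has degree at least 1), α'(G) + β'(G) = |V|, where α'(G) is the maximum size of a matching of G and β'(G) is the minimum size of an edge cover of G. -/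
/-!
Given a matching `M`, adding one edge at each of the `|V| - 2|M|` unmatched vertices gives an edge
cover with at most `|V| - |M|` edges. Conversely, given an edge cover `L`, take a matching `M ⊆ L`
that is maximal inside `L`. Every unmatched vertex lies on an edge of `L \ M`, and no edge of `L \ M`
joins two unmatched vertices, since it could be added to `M`; hence `|V| - 2|M| ≤ |L| - |M|`.
Applied to a maximum matching and a minimum edge cover, the two bounds give the identity.
-/

open Finset

theorem Nat.sSup_add_sInf_eq_of_exchange {A B : Set ℕ} {N : ℕ} (hA : A.Nonempty)
    (hAB : ∀ a ∈ A, ∃ b ∈ B, a + b ≤ N) (hBA : ∀ b ∈ B, ∃ a ∈ A, N ≤ a + b) :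
    sSup A + sInf B = N := by
  have hbdd : BddAbove A := ⟨N, fun a ha => by
    obtain ⟨b, -, hb⟩ := hAB a ha
    omega⟩
  obtain ⟨b, hb, hle⟩ := hAB _ (Nat.sSup_mem hA hbdd)
  obtain ⟨a, ha, hge⟩ := hBA _ (Nat.sInf_mem ⟨b, hb⟩)
  have := le_csSup hbdd ha
  have := Nat.sInf_le hb
  omega

namespace SimpleGraph

variable {V : Type*} (G : SimpleGraph V)

def IsMatchingFinset (M : Finset (Sym2 V)) : Prop :=
  (∀ e ∈ M, e ∈ G.edgeSet) ∧ ∀ e ∈ M, ∀ f ∈ M, e ≠ f → ∀ v : V, v ∈ e → v ∉ f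

def IsEdgeCover (L : Finset (Sym2 V)) : Prop :=
  (∀ e ∈ L, e ∈ G.edgeSet) ∧ ∀ v : V, ∃ e ∈ L, v ∈ e

variable {G}

lemma IsMatchingFinset.insert [DecidableEq V] {M : Finset (Sym2 V)} {e : Sym2 V}
    (hM : G.IsMatchingFinset M) (he : e ∈ G.edgeSet) (hfree : ∀ v ∈ e, ∀ f ∈ M, v ∉ f) :
    G.IsMatchingFinset (insert e M) := by
  refine ⟨fun f hf => ?_, fun f hf f' hf' hne v hvf hvf' => ?_⟩
  · rcases mem_insert.1 hf with rfl | hf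
    exacts [he, hM.1 f hf]
  · rcases mem_insert.1 hf with rfl | hfM <;> rcases mem_insert.1 hf' with rfl | hf'M
    · exact hne rfl
    · exact hfree v hvf f' hf'M hvf'
    · exact hfree v hvf' f hfM hvf
    · exact hM.2 f hfM f' hf'M hne v hvf hvf'

variable [Fintype V] [DecidableEq V]

def unmatchedVerts (M : Finset (Sym2 V)) : Finset V := {v | ∀ e ∈ M, v ∉ e}

lemma card_unmatchedVerts_add_two_mul_card {M : Finset (Sym2 V)} (hM : G.IsMatchingFinset M) :
    #(unmatchedVerts M) + 2 * #M = Fintype.card V := by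
  have hmatched : (unmatchedVerts M)ᶜ = M.biUnion Sym2.toFinset := by
    ext v
    simp [unmatchedVerts, Sym2.mem_toFinset]
  have hdisj : (M : Set (Sym2 V)).PairwiseDisjoint Sym2.toFinset := fun e he f hf hne =>
    Finset.disjoint_left.2 fun v hve hvf =>
      hM.2 e he f hf hne v (Sym2.mem_toFinset.1 hve) (Sym2.mem_toFinset.1 hvf)
  have hcard : #(M.biUnion Sym2.toFinset) = 2 * #M := by
    rw [card_biUnion hdisj, sum_const_nat fun e he =>
      Sym2.card_toFinset_of_not_isDiag e (G.not_isDiag_of_mem_edgeSet (hM.1 e he)), mul_comm]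
  rw [← hcard, ← hmatched, card_add_card_compl]

lemma IsMatchingFinset.exists_isEdgeCover (hG : ∀ v, ∃ w, G.Adj v w) {M : Finset (Sym2 V)}
    (hM : G.IsMatchingFinset M) : ∃ L, G.IsEdgeCover L ∧ #L + #M ≤ Fintype.card V := by
  choose w hw using hG
  refine ⟨M ∪ (unmatchedVerts M).image fun v => s(v, w v), ⟨fun e he => ?_, fun v => ?_⟩, ?_⟩
  · rcases mem_union.1 he with he | he
    · exact hM.1 e he
    · obtain ⟨v, -, rfl⟩ := mem_image.1 he
      exact hw v
  · by_cases hv : v ∈ unmatchedVerts M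
    · exact ⟨s(v, w v), mem_union_right _ (mem_image_of_mem _ hv), Sym2.mem_mk_left _ _⟩
    · simp only [unmatchedVerts, mem_filter, mem_univ, true_and, not_forall, not_not] at hv
      obtain ⟨e, he, hve⟩ := hv
      exact ⟨e, mem_union_left _ he, hve⟩
  · have := card_unmatchedVerts_add_two_mul_card hM
    have := (card_union_le M ((unmatchedVerts M).image fun v => s(v, w v))).trans
      (Nat.add_le_add_left card_image_le #M)
    omega

lemma IsEdgeCover.card_unmatchedVerts_le {L M : Finset (Sym2 V)} (hL : G.IsEdgeCover L)
    (hM : G.IsMatchingFinset M) (hmax : ∀ e ∈ L \ M, ¬ G.IsMatchingFinset (insert e M)) :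
    #(unmatchedVerts M) ≤ #(L \ M) := by
  choose g hgL hvg using hL.2
  have hunm : ∀ v ∈ unmatchedVerts M, ∀ f ∈ M, v ∉ f := fun v hv => (mem_filter.1 hv).2
  have hmaps : ∀ v ∈ unmatchedVerts M, g v ∈ L \ M := fun v hv =>
    mem_sdiff.2 ⟨hgL v, fun hgM => hunm v hv _ hgM (hvg v)⟩
  refine card_le_card_of_injOn g hmaps fun v hv w hw hgvw => ?_
  by_contra hne
  have hg : g v = s(v, w) := (Sym2.mem_and_mem_iff hne).1 ⟨hvg v, hgvw ▸ hvg w⟩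
  refine hmax (g v) (hmaps v hv) (hM.insert (hL.1 _ (hgL v)) ?_)
  rw [hg]
  intro u hu
  rcases Sym2.mem_iff.1 hu with rfl | rfl
  exacts [hunm u hv, hunm u hw]

lemma IsEdgeCover.exists_isMatchingFinset {L : Finset (Sym2 V)} (hL : G.IsEdgeCover L) :
    ∃ M, G.IsMatchingFinset M ∧ Fintype.card V ≤ #M + #L := by
  classical
  obtain ⟨M, hMS, hMmax⟩ := exists_max_image {M ∈ L.powerset | G.IsMatchingFinset M} card
    ⟨∅, mem_filter.2 ⟨empty_mem_powerset L, by simp [IsMatchingFinset]⟩⟩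
  obtain ⟨hML, hM⟩ := mem_filter.1 hMS
  have hmaximal : ∀ e ∈ L \ M, ¬ G.IsMatchingFinset (insert e M) := by
    intro e he hins
    obtain ⟨heL, heM⟩ := mem_sdiff.1 he
    have := hMmax _ (mem_filter.2 ⟨mem_powerset.2 (insert_subset heL (mem_powerset.1 hML)), hins⟩)
    rw [card_insert_of_notMem heM] at this
    omega
  refine ⟨M, hM, ?_⟩
  have hunm := hL.card_unmatchedVerts_le hM hmaximal
  rw [card_sdiff_of_subset (mem_powerset.1 hML)] at hunm
  have := card_unmatchedVerts_add_two_mul_card hM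
  have := card_le_card (mem_powerset.1 hML)
  omega

end SimpleGraph

open SimpleGraph in
theorem gallai_edge_identity
    {V : Type*} [Fintype V] (G : SimpleGraph V) [DecidableRel G.Adj]
    (h : ∀ v : V, 1 ≤ G.degree v) :
    sSup {n : ℕ | ∃ M : Finset (Sym2 V), (∀ e ∈ M, e ∈ G.edgeSet) ∧
        (∀ e ∈ M, ∀ f ∈ M, e ≠ f → ∀ v : V, v ∈ e → v ∉ f) ∧ M.card = n}
      + sInf {n : ℕ | ∃ L : Finset (Sym2 V), (∀ e ∈ L, e ∈ G.edgeSet) ∧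
          (∀ v : V, ∃ e ∈ L, v ∈ e) ∧ L.card = n}
      = Fintype.card V := by
  classical
  have hG : ∀ v, ∃ w, G.Adj v w := fun v => (G.degree_pos_iff_exists_adj v).1 (h v)
  refine Nat.sSup_add_sInf_eq_of_exchange ⟨0, ∅, by simp, by simp, rfl⟩ ?_ ?_
  · rintro _ ⟨M, hME, hMd, rfl⟩
    obtain ⟨L, ⟨hLE, hLC⟩, hcard⟩ := IsMatchingFinset.exists_isEdgeCover hG ⟨hME, hMd⟩
    exact ⟨#L, ⟨L, hLE, hLC, rfl⟩, by omega⟩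
  · rintro _ ⟨L, hLE, hLC, rfl⟩
    obtain ⟨M, ⟨hME, hMd⟩, hcard⟩ := IsEdgeCover.exists_isMatchingFinset ⟨hLE, hLC⟩
    exact ⟨#M, ⟨M, hME, hMd, rfl⟩, hcard⟩
end

section
/- Vizing's theorem: every finite simple graph G admits a proper edge coloring with Δ(G) + 1 colors, i.e., there is a function assigning to each edge of G one of Δ(G) + 1 colors such that any two distinct edges sharing an endpoint receive different colors. -/
/-!
Misra–Gries argument. Colour the edges one at a time with `Δ + 1` colours, so that every vertex
always misses some colour. To colour an uncoloured edge `x y₀`, grow a fan `y₀, y₁, …, y_k` of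
neighbours of `x`, the colour of `x y_{i+1}` being missing at `y_i`, as long as possible.
Shifting colours down a fan (`x y_i` takes the colour of `x y_{i+1}`) moves the uncoloured edge
to its last vertex, where it can be coloured once `x` and that vertex miss a common colour.
Let `a` be missing at `x` and `b` at `y_k`. If `b` is used at `x`, maximality puts it on some
`x y_j`, so `b` is missing at `y_{j-1}` too. Swapping `a` and `b` on the `a/b`-Kempe chain
starting at `x` frees `b` at `x`. That chain is a path, and `y_{j-1}`, `y_k` can only be its end,
so it misses one of them, where `b` stays missing: shift the fan `y₀ … y_{j-1}` or `y₀ … y_k`.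
-/

open Function

theorem Set.eq_of_encard_le_two {β : Type*} {s : Set β} {u a b : β} (hs : s.encard ≤ 2)
    (hu : u ∈ s) (ha : a ∈ s) (hb : b ∈ s) (hua : u ≠ a) (hub : u ≠ b) : a = b := by
  by_contra hab
  have h3 : ({u, a, b} : Set β).encard = 3 :=
    Set.encard_eq_three.2 ⟨u, a, b, hua, hub, hab, rfl⟩
  have := Set.encard_le_encard (show ({u, a, b} : Set β) ⊆ s by simp [Set.insert_subset_iff, *])
  rw [h3] at this
  exact absurd (this.trans hs) (by decide)

namespace SimpleGraph

variable {V : Type*} {G : SimpleGraph V} {α : Type*}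

theorem Walk.IsPath.getVert_eq_getVert {x y z : V} {p : G.Walk x y} {q : G.Walk x z}
    (hp : p.IsPath) (hq : q.IsPath) (hdeg : ∀ v, (G.neighborSet v).encard ≤ 2)
    (hx : (G.neighborSet x).Subsingleton) :
    ∀ i ≤ p.length, i ≤ q.length → p.getVert i = q.getVert i := by
  intro i
  induction i using Nat.strong_induction_on with
  | _ i ih =>
  intro hip hiq
  match i, ih with
  | 0, _ => simp
  | 1, _ =>
    refine hx ?_ ?_
    · simpa using p.adj_getVert_succ (i := 0) (by omega)
    · simpa using q.adj_getVert_succ (i := 0) (by omega)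
  | j + 2, ih =>
    have hv := ih (j + 1) (by omega) (by omega) (by omega)
    have hu := ih j (by omega) (by omega) (by omega)
    refine Set.eq_of_encard_le_two (hdeg (p.getVert (j + 1))) (u := p.getVert j)
      (p.adj_getVert_succ (by omega)).symm (p.adj_getVert_succ (by omega))
      (hv ▸ q.adj_getVert_succ (by omega)) ?_ ?_
    · exact fun h => by
        have := hp.getVert_injOn (by simp; omega) (by simp; omega) h
        omega
    · exact fun h => by
        rw [hu] at h
        have := hq.getVert_injOn (by simp; omega) (by simp; omega) h
        omega

theorem eq_of_reachable_of_subsingleton_neighborSet {x y z : V}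
    (hdeg : ∀ v, (G.neighborSet v).encard ≤ 2) (hx : (G.neighborSet x).Subsingleton)
    (hy : (G.neighborSet y).Subsingleton) (hz : (G.neighborSet z).Subsingleton)
    (hyx : y ≠ x) (hzx : z ≠ x) (hxy : G.Reachable x y) (hxz : G.Reachable x z) : y = z := by
  classical
  obtain ⟨p, hp⟩ := hxy.some.toPath
  obtain ⟨q, hq⟩ := hxz.some.toPath
  clear hxy hxz
  wlog hpq : p.length ≤ q.length generalizing y z
  · exact (this hz hy hzx hyx q hq p hp (by omega)).symm
  have heq := hp.getVert_eq_getVert hq hdeg hx p.length le_rfl hpq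
  rw [Walk.getVert_length] at heq
  generalize p.length = ℓ at heq hpq
  obtain hpq | hpq := hpq.eq_or_lt
  · rw [heq, hpq, Walk.getVert_length]
  subst heq
  have hℓ : ℓ ≠ 0 := fun h => hyx (by simp [h])
  have hprev := q.adj_getVert_succ (i := ℓ - 1) (by omega)
  rw [Nat.sub_add_cancel (by omega)] at hprev
  have := hq.getVert_injOn (by simp; omega) (by simp; omega)
    (hy hprev.symm (q.adj_getVert_succ hpq))
  omega

variable (G α) in
structure PartialEdgeColoring where
  color : Sym2 V → Option α
  adj_of_color_eq_some {u v : V} {a : α} : color s(u, v) = some a → G.Adj u v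
  eq_of_color_eq_some {u v w : V} {a : α} :
    color s(u, v) = some a → color s(u, w) = some a → v = w

namespace PartialEdgeColoring

variable (c : PartialEdgeColoring G α)

def support : Set (Sym2 V) := {e | c.color e ≠ none}

def IsMissing (v : V) (a : α) : Prop := ∀ w, c.color s(v, w) ≠ some a

theorem exists_isMissing [Fintype V] [DecidableRel G.Adj] [Fintype α] {v : V}
    (h : G.degree v < Fintype.card α) : ∃ a, c.IsMissing v a := by
  by_contra! hall
  simp only [IsMissing, not_forall, not_not] at hall
  choose w hw using hall
  have : Fintype.card α ≤ G.degree v := by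
    rw [← card_neighborFinset_eq_degree]
    refine Finset.card_le_card_of_injOn w (fun a _ => ?_) fun a _ b _ hab => ?_
    · simpa using c.adj_of_color_eq_some (hw a)
    · simpa [hab, hw b] using (hw a).symm
  omega

variable {c}

open Classical in
noncomputable def erase (c : PartialEdgeColoring G α) (e : Sym2 V) : PartialEdgeColoring G α where
  color := update c.color e none
  adj_of_color_eq_some {u v a} h := by
    rw [update_apply] at h
    split_ifs at h
    exact c.adj_of_color_eq_some h
  eq_of_color_eq_some {u v w a} h h' := by
    rw [update_apply] at h h'
    split_ifs at h h'
    exact c.eq_of_color_eq_some h h'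

@[simp]
theorem erase_color_self (e : Sym2 V) : (c.erase e).color e = none := by
  simp [erase]

theorem erase_color_of_ne {e e' : Sym2 V} (h : e' ≠ e) : (c.erase e).color e' = c.color e' := by
  simp [erase, h]

theorem support_erase (e : Sym2 V) : (c.erase e).support = c.support \ {e} := by
  ext e'
  by_cases h : e' = e
  · simp [support, h]
  · simp [support, h, erase_color_of_ne h]

theorem IsMissing.erase {v : V} {a : α} (h : c.IsMissing v a) (e : Sym2 V) :
    (c.erase e).IsMissing v a := by
  intro w hw
  by_cases he : s(v, w) = e
  · simp [he] at hw
  · exact h w (by rwa [erase_color_of_ne he] at hw)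

theorem isMissing_erase_of_color_eq_some {x y : V} {a : α} (h : c.color s(x, y) = some a) :
    (c.erase s(x, y)).IsMissing x a := by
  intro w hw
  by_cases hwy : w = y
  · simp [hwy] at hw
  · rw [erase_color_of_ne (mt Sym2.congr_right.1 hwy)] at hw
    exact hwy (c.eq_of_color_eq_some hw h)

open Classical in
noncomputable def addEdge (c : PartialEdgeColoring G α) {x y : V} {a : α} (hxy : G.Adj x y)
    (hx : c.IsMissing x a) (hy : c.IsMissing y a) : PartialEdgeColoring G α where
  color := update c.color s(x, y) (some a)
  adj_of_color_eq_some {u v b} h := by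
    rw [update_apply] at h
    split_ifs at h with he
    · obtain ⟨rfl, rfl⟩ | ⟨rfl, rfl⟩ := Sym2.eq_iff.1 he
      exacts [hxy, hxy.symm]
    · exact c.adj_of_color_eq_some h
  eq_of_color_eq_some {u v w b} h h' := by
    have hmiss {v} (he : s(u, v) = s(x, y)) : c.IsMissing u a := by
      obtain ⟨rfl, rfl⟩ | ⟨rfl, rfl⟩ := Sym2.eq_iff.1 he <;> assumption
    rw [update_apply] at h h'
    by_cases he : s(u, v) = s(x, y) <;> by_cases he' : s(u, w) = s(x, y) <;>
      simp only [he, he', if_true, if_false, Option.some_inj] at h h'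
    · exact Sym2.congr_right.1 (he.trans he'.symm)
    · exact absurd (h ▸ h') (hmiss he w)
    · exact absurd (h' ▸ h) (hmiss he' v)
    · exact c.eq_of_color_eq_some h h'

section addEdge

variable {x y : V} {a : α}

@[simp]
theorem addEdge_color_self {hxy : G.Adj x y} {hx : c.IsMissing x a} {hy : c.IsMissing y a} :
    (c.addEdge hxy hx hy).color s(x, y) = some a := by
  simp [addEdge]

theorem addEdge_color_of_ne {e : Sym2 V} (he : e ≠ s(x, y)) {hxy : G.Adj x y}
    {hx : c.IsMissing x a} {hy : c.IsMissing y a} : (c.addEdge hxy hx hy).color e = c.color e := by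
  simp [addEdge, he]

theorem support_addEdge {hxy : G.Adj x y} {hx : c.IsMissing x a} {hy : c.IsMissing y a} :
    (c.addEdge hxy hx hy).support = insert s(x, y) c.support := by
  ext e
  by_cases he : e = s(x, y)
  · simp [support, he]
  · simp [support, he, addEdge_color_of_ne he]

theorem IsMissing.addEdge_of_ne {v : V} {b : α} (hv : c.IsMissing v b) (hb : b ≠ a)
    {hxy : G.Adj x y} {hx : c.IsMissing x a} {hy : c.IsMissing y a} :
    (c.addEdge hxy hx hy).IsMissing v b := by
  intro w hw
  by_cases he : s(v, w) = s(x, y)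
  · simp [he, hb.symm] at hw
  · exact hv w (by rwa [addEdge_color_of_ne he] at hw)

theorem IsMissing.addEdge_of_notMem {v : V} {b : α} (hv : c.IsMissing v b) (hvx : v ≠ x)
    (hvy : v ≠ y) {hxy : G.Adj x y} {hx : c.IsMissing x a} {hy : c.IsMissing y a} :
    (c.addEdge hxy hx hy).IsMissing v b := by
  intro w hw
  have he : s(v, w) ≠ s(x, y) := by simp [hvx, hvy]
  exact hv w (by rwa [addEdge_color_of_ne he] at hw)

end addEdge

def kempeGraph (c : PartialEdgeColoring G α) (a b : α) : SimpleGraph V where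
  Adj u v := c.color s(u, v) = some a ∨ c.color s(u, v) = some b
  symm := ⟨fun u v => by rw [Sym2.eq_swap]; exact id⟩
  loopless := ⟨fun u h =>
    G.loopless.irrefl u (h.elim c.adj_of_color_eq_some c.adj_of_color_eq_some)⟩

@[simp]
theorem kempeGraph_adj {a b : α} {u v : V} :
    (c.kempeGraph a b).Adj u v ↔ c.color s(u, v) = some a ∨ c.color s(u, v) = some b :=
  Iff.rfl

section kempe

variable {a b : α} {x u v : V}

theorem encard_neighborSet_kempeGraph_le (v : V) :
    ((c.kempeGraph a b).neighborSet v).encard ≤ 2 := by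
  have hle (a : α) : {w | c.color s(v, w) = some a}.encard ≤ 1 :=
    Set.encard_le_one_iff.2 fun _ _ => c.eq_of_color_eq_some
  calc ((c.kempeGraph a b).neighborSet v).encard
      ≤ ({w | c.color s(v, w) = some a} ∪ {w | c.color s(v, w) = some b}).encard :=
        Set.encard_le_encard fun _ h => by simpa using h
    _ ≤ 1 + 1 := (Set.encard_union_le _ _).trans (add_le_add (hle a) (hle b))
    _ = 2 := by norm_num

theorem subsingleton_neighborSet_kempeGraph (h : c.IsMissing v a ∨ c.IsMissing v b) :
    ((c.kempeGraph a b).neighborSet v).Subsingleton := by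
  intro w hw w' hw'
  rw [mem_neighborSet, kempeGraph_adj] at hw hw'
  rcases hw with hw | hw <;> rcases hw' with hw' | hw'
  all_goals first
    | exact c.eq_of_color_eq_some hw hw'
    | exact (h.elim (fun h => h _ ‹_›) (fun h => h _ ‹_›)).elim

variable [DecidableEq α]

theorem map_swap_color_of_reachable_of_not_reachable (hu : (c.kempeGraph a b).Reachable x u)
    (hv : ¬(c.kempeGraph a b).Reachable x v) :
    (c.color s(u, v)).map (Equiv.swap a b) = c.color s(u, v) := by
  have hadj : ¬(c.kempeGraph a b).Adj u v := fun h => hv (hu.trans h.reachable)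
  rw [kempeGraph_adj, not_or] at hadj
  cases h : c.color s(u, v) with
  | none => rfl
  | some γ =>
    rw [h, Option.some_inj, Option.some_inj] at hadj
    simp [Equiv.swap_apply_of_ne_of_ne hadj.1 hadj.2]

open Classical in
noncomputable def kempeSwap (c : PartialEdgeColoring G α) (a b : α) (x : V) :
    PartialEdgeColoring G α where
  color := Sym2.lift ⟨fun u v => if (c.kempeGraph a b).Reachable x u then
      (c.color s(u, v)).map (Equiv.swap a b) else c.color s(u, v), fun u v => by
    dsimp only
    rw [Sym2.eq_swap (a := v)]
    by_cases hu : (c.kempeGraph a b).Reachable x u <;>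
      by_cases hv : (c.kempeGraph a b).Reachable x v <;>
      simp only [hu, hv, if_true, if_false]
    · exact c.map_swap_color_of_reachable_of_not_reachable hu hv
    · rw [Sym2.eq_swap]
      exact (c.map_swap_color_of_reachable_of_not_reachable hv hu).symm⟩
  adj_of_color_eq_some {u v γ} h := by
    simp only [Sym2.lift_mk] at h
    split_ifs at h
    · obtain ⟨δ, hδ, -⟩ := Option.map_eq_some_iff.1 h
      exact c.adj_of_color_eq_some hδ
    · exact c.adj_of_color_eq_some h
  eq_of_color_eq_some {u v w γ} h h' := by
    simp only [Sym2.lift_mk] at h h'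
    split_ifs at h h'
    · obtain ⟨δ, hδ, rfl⟩ := Option.map_eq_some_iff.1 h
      obtain ⟨δ', hδ', hδδ'⟩ := Option.map_eq_some_iff.1 h'
      rw [(Equiv.swap a b).injective hδδ'] at hδ'
      exact c.eq_of_color_eq_some hδ hδ'
    · exact c.eq_of_color_eq_some h h'

theorem kempeSwap_color_of_reachable (hu : (c.kempeGraph a b).Reachable x u) (v : V) :
    (c.kempeSwap a b x).color s(u, v) = (c.color s(u, v)).map (Equiv.swap a b) := by
  simp [kempeSwap, hu]

theorem kempeSwap_color_of_not_reachable (hu : ¬(c.kempeGraph a b).Reachable x u) (v : V) :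
    (c.kempeSwap a b x).color s(u, v) = c.color s(u, v) := by
  simp [kempeSwap, hu]

theorem kempeSwap_color_eq_none_iff (e : Sym2 V) :
    (c.kempeSwap a b x).color e = none ↔ c.color e = none := by
  induction e using Sym2.ind with
  | _ u v =>
    by_cases hu : (c.kempeGraph a b).Reachable x u
    · simp [c.kempeSwap_color_of_reachable hu]
    · simp [c.kempeSwap_color_of_not_reachable hu]

theorem support_kempeSwap : (c.kempeSwap a b x).support = c.support :=
  Set.ext fun e => (c.kempeSwap_color_eq_none_iff e).not

theorem kempeSwap_color_eq_some_iff {γ : α} (ha : γ ≠ a) (hb : γ ≠ b) (e : Sym2 V) :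
    (c.kempeSwap a b x).color e = some γ ↔ c.color e = some γ := by
  induction e using Sym2.ind with
  | _ u v =>
    by_cases hu : (c.kempeGraph a b).Reachable x u
    · simp [c.kempeSwap_color_of_reachable hu, Equiv.swap_apply_eq_iff,
        Equiv.swap_apply_of_ne_of_ne ha hb]
    · rw [c.kempeSwap_color_of_not_reachable hu]

theorem isMissing_kempeSwap_of_reachable (hu : (c.kempeGraph a b).Reachable x u) (γ : α) :
    (c.kempeSwap a b x).IsMissing u γ ↔ c.IsMissing u (Equiv.swap a b γ) := by
  simp [IsMissing, c.kempeSwap_color_of_reachable hu, Equiv.swap_apply_eq_iff]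

theorem isMissing_kempeSwap_of_not_reachable (hu : ¬(c.kempeGraph a b).Reachable x u) (γ : α) :
    (c.kempeSwap a b x).IsMissing u γ ↔ c.IsMissing u γ := by
  simp [IsMissing, c.kempeSwap_color_of_not_reachable hu]

theorem isMissing_kempeSwap_iff {γ : α} (ha : γ ≠ a) (hb : γ ≠ b) :
    (c.kempeSwap a b x).IsMissing u γ ↔ c.IsMissing u γ :=
  forall_congr' fun _ => (c.kempeSwap_color_eq_some_iff ha hb _).not

end kempe

def FanStep (c : PartialEdgeColoring G α) (x u v : V) : Prop :=
  ∃ a, c.color s(x, v) = some a ∧ c.IsMissing u a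

theorem FanStep.kempeSwap [DecidableEq α] {a b : α} {x x₀ u v : V} (h : c.FanStep x u v)
    (ha : c.color s(x, v) ≠ some a) (hb : c.color s(x, v) ≠ some b) :
    (c.kempeSwap a b x₀).FanStep x u v := by
  obtain ⟨γ, hγ, hu⟩ := h
  have hγa : γ ≠ a := fun h => ha (h ▸ hγ)
  have hγb : γ ≠ b := fun h => hb (h ▸ hγ)
  exact ⟨γ, (c.kempeSwap_color_eq_some_iff hγa hγb _).2 hγ,
    (c.isMissing_kempeSwap_iff hγa hγb).2 hu⟩

structure IsFan (c : PartialEdgeColoring G α) (x y : V) (l : List V) : Prop where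
  adj : G.Adj x y
  color_eq_none : c.color s(x, y) = none
  nodup : (y :: l).Nodup
  isChain : (y :: l).IsChain (c.FanStep x)

namespace IsFan

variable {x y : V} {l : List V}

theorem adj_of_mem (hF : c.IsFan x y l) {v : V} (hv : v ∈ y :: l) : G.Adj x v := by
  obtain rfl | hv := List.mem_cons.1 hv
  · exact hF.adj
  · exact hF.isChain.cons_induction (G.Adj x) l
      (fun _ _ ⟨_, h, _⟩ _ => c.adj_of_color_eq_some h) hF.adj v hv

theorem exists_insert_support_subset_of_isMissing {a : α} (hF : c.IsFan x y l)
    (hx : c.IsMissing x a)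
    (hl : c.IsMissing ((y :: l).getLast (List.cons_ne_nil y l)) a) :
    ∃ c' : PartialEdgeColoring G α, insert s(x, y) c.support ⊆ c'.support := by
  induction l generalizing c y with
  | nil => exact ⟨c.addEdge hF.adj hx hl, c.support_addEdge.superset⟩
  | cons y' l ih =>
    obtain ⟨b, hxy', hy⟩ : c.FanStep x y y' := List.isChain_cons_cons.1 hF.isChain |>.1
    have hyy' : y ≠ y' := fun h => (List.nodup_cons.1 hF.nodup).1 (h ▸ List.mem_cons_self ..)
    have hy_tail : y ∉ y' :: l := (List.nodup_cons.1 hF.nodup).1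
    let c' := (c.erase s(x, y')).addEdge hF.adj (isMissing_erase_of_color_eq_some hxy')
      (hy.erase _)
    have hc' {v : V} (hv : v ∈ y' :: l) {γ : α} (h : c.IsMissing v γ) : c'.IsMissing v γ :=
      (h.erase _).addEdge_of_notMem (hF.adj_of_mem (List.mem_cons_of_mem _ hv)).ne'
        (fun (h : v = y) => hy_tail (h ▸ hv))
    have hF' : c'.IsFan x y' l := by
      refine ⟨c.adj_of_color_eq_some hxy', ?_, hF.nodup.of_cons, ?_⟩
      · rw [addEdge_color_of_ne (mt Sym2.congr_right.1 hyy'.symm), erase_color_self]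
      · refine hF.isChain.tail.imp_of_mem_tail_imp fun u v hu hv ⟨γ, hγ, hu'⟩ =>
          ⟨γ, ?_, hc' hu hu'⟩
        have hvy : v ≠ y := fun h => hy_tail (h ▸ List.mem_of_mem_tail hv)
        have hvy' : v ≠ y' := fun h => (List.nodup_cons.1 hF.nodup.of_cons).1 (h ▸ hv)
        rwa [addEdge_color_of_ne (mt Sym2.congr_right.1 hvy),
          erase_color_of_ne (mt Sym2.congr_right.1 hvy')]
    have hab : a ≠ b := fun h => hx y' (h ▸ hxy')
    rw [List.getLast_cons_cons] at hl
    obtain ⟨c'', hc''⟩ := ih hF' ((hx.erase _).addEdge_of_ne hab) (hc' (List.getLast_mem _) hl)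
    refine ⟨c'', subset_trans ?_ hc''⟩
    rw [support_addEdge, support_erase]
    intro e he
    by_cases h : e = s(x, y') <;> simp_all

theorem exists_insert_support_subset_of_mem [DecidableEq α] {a b : α} {z : V}
    (hF : c.IsFan x y l) (hx : c.IsMissing x a)
    (hl : c.IsMissing ((y :: l).getLast (List.cons_ne_nil y l)) b)
    (hz : c.color s(x, z) = some b) (hzl : z ∈ l) :
    ∃ c' : PartialEdgeColoring G α, insert s(x, y) c.support ⊆ c'.support := by
  obtain ⟨s, t, rfl⟩ := List.append_of_mem hzl
  have hchain : ((y :: s) ++ z :: t).IsChain (c.FanStep x) := hF.isChain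
  have hnodup : ((y :: s) ++ z :: t).Nodup := hF.nodup
  have hdisj := List.disjoint_of_nodup_append hnodup
  have hzs : z ∉ y :: s := fun h => hdisj h (List.mem_cons_self ..)
  have hzt : z ∉ t := (List.nodup_cons.1 hnodup.of_append_right).1
  set a' := (y :: s).getLast (List.cons_ne_nil y s)
  set w := (z :: t).getLast (List.cons_ne_nil z t)
  have hw : (y :: (s ++ z :: t)).getLast (List.cons_ne_nil _ _) = w :=
    List.getLast_append_of_ne_nil (l := y :: s) _ _
  rw [hw] at hl
  obtain ⟨γ, hγ, ha'⟩ : c.FanStep x a' z :=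
    hchain.rel_getLast_head_of_append (List.cons_ne_nil _ _) (List.cons_ne_nil _ _)
  rw [hz, Option.some_inj] at hγ
  subst hγ
  let c' := c.kempeSwap a b x
  have hsupp : c'.support = c.support := c.support_kempeSwap
  have hnone : c'.color s(x, y) = none := (c.kempeSwap_color_eq_none_iff _).2 hF.color_eq_none
  have hx' : c'.IsMissing x b :=
    (c.isMissing_kempeSwap_of_reachable (Reachable.refl x) b).2 (by simpa using hx)
  have hstep {u v : V} (huv : c.FanStep x u v) (hv : v ≠ z) : c'.FanStep x u v :=
    huv.kempeSwap (hx v) (fun h => hv (c.eq_of_color_eq_some h hz))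
  have hchain_s : (y :: s).IsChain (c'.FanStep x) :=
    hchain.left_of_append.imp_of_mem_tail_imp fun _ _ _ hv huv =>
      hstep huv (fun h => hzs (h ▸ List.mem_of_mem_tail hv))
  have hne_x {v : V} (hv : v ∈ (y :: s) ++ z :: t) : v ≠ x := (hF.adj_of_mem hv).ne'
  have hnot_both :
      ¬((c.kempeGraph a b).Reachable x a' ∧ (c.kempeGraph a b).Reachable x w) := by
    refine fun ⟨ha'r, hwr⟩ => hdisj (List.getLast_mem (List.cons_ne_nil y s)) ?_
    change a' ∈ z :: t
    rw [eq_of_reachable_of_subsingleton_neighborSet c.encard_neighborSet_kempeGraph_le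
      (c.subsingleton_neighborSet_kempeGraph (.inl hx))
      (c.subsingleton_neighborSet_kempeGraph (.inr ha'))
      (c.subsingleton_neighborSet_kempeGraph (.inr hl))
      (hne_x (List.mem_append_left _ (List.getLast_mem _)))
      (hne_x (List.mem_append_right _ (List.getLast_mem _))) ha'r hwr]
    exact List.getLast_mem _
  by_cases ha'r : (c.kempeGraph a b).Reachable x a'
  · -- the swap recolours `x z` from `b` to `a`, now missing at `a'`: the whole fan survives
    have hwr : ¬(c.kempeGraph a b).Reachable x w := fun hwr => hnot_both ⟨ha'r, hwr⟩
    have hchain' : ((y :: s) ++ z :: t).IsChain (c'.FanStep x) := by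
      refine hchain_s.append (hchain.right_of_append.imp_of_mem_tail_imp fun _ _ _ hv huv =>
        hstep huv (fun h => hzt (h ▸ hv))) ?_
      simp only [List.getLast?_eq_some_getLast (List.cons_ne_nil y s), Option.mem_some_iff,
        List.head?_cons]
      rintro _ rfl _ rfl
      refine ⟨a, by simp [c', c.kempeSwap_color_of_reachable (Reachable.refl x), hz], ?_⟩
      exact (c.isMissing_kempeSwap_of_reachable ha'r a).2 (by simpa using ha')
    obtain ⟨c'', hc''⟩ := exists_insert_support_subset_of_isMissing (l := s ++ z :: t)
      ⟨hF.adj, hnone, hnodup, hchain'⟩ hx'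
      (by rw [hw]; exact (c.isMissing_kempeSwap_of_not_reachable hwr b).2 hl)
    exact ⟨c'', hsupp ▸ hc''⟩
  · obtain ⟨c'', hc''⟩ := exists_insert_support_subset_of_isMissing
      ⟨hF.adj, hnone, hnodup.sublist (List.sublist_append_left _ _), hchain_s⟩ hx'
      ((c.isMissing_kempeSwap_of_not_reachable ha'r b).2 ha')
    exact ⟨c'', hsupp ▸ hc''⟩

theorem concat {b : α} {z : V} (hF : c.IsFan x y l)
    (hl : c.IsMissing ((y :: l).getLast (List.cons_ne_nil y l)) b)
    (hz : c.color s(x, z) = some b) (hzl : z ∉ y :: l) : c.IsFan x y (l ++ [z]) where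
  adj := hF.adj
  color_eq_none := hF.color_eq_none
  nodup := by
    rw [← List.cons_append, List.nodup_append]
    exact ⟨hF.nodup, List.nodup_singleton z, fun u hu v hv => by
      rw [List.mem_singleton.1 hv]; exact fun h => hzl (h ▸ hu)⟩
  isChain := by
    rw [← List.cons_append]
    refine hF.isChain.append (List.isChain_singleton z) ?_
    simp only [List.getLast?_eq_some_getLast (List.cons_ne_nil y l), Option.mem_some_iff,
      List.head?_cons]
    rintro _ rfl _ rfl
    exact ⟨b, hz, hl⟩

end IsFan

theorem IsFan.exists_insert_support_subset [Fintype V] [DecidableRel G.Adj] [Fintype α]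
    [DecidableEq α] (hdeg : ∀ v, G.degree v < Fintype.card α) {x y : V} {l : List V}
    (hF : c.IsFan x y l) :
    ∃ c' : PartialEdgeColoring G α, insert s(x, y) c.support ⊆ c'.support := by
  obtain ⟨a, ha⟩ := c.exists_isMissing (hdeg x)
  obtain ⟨b, hb⟩ := c.exists_isMissing (hdeg ((y :: l).getLast (List.cons_ne_nil y l)))
  by_cases hxb : c.IsMissing x b
  · exact hF.exists_insert_support_subset_of_isMissing hxb hb
  obtain ⟨z, hz⟩ : ∃ z, c.color s(x, z) = some b := by simpa [IsMissing] using hxb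
  by_cases hzl : z ∈ y :: l
  · have hzy : z ≠ y := by rintro rfl; simp [hF.color_eq_none] at hz
    exact hF.exists_insert_support_subset_of_mem ha hb hz ((List.mem_cons.1 hzl).resolve_left hzy)
  · have := (hF.concat hb hz hzl).nodup.length_le_card
    exact (hF.concat hb hz hzl).exists_insert_support_subset hdeg
termination_by Fintype.card V - l.length
decreasing_by simp_all; omega

variable [Fintype V] [DecidableRel G.Adj] [Fintype α] [DecidableEq α]

theorem exists_insert_support_subset (hdeg : ∀ v, G.degree v < Fintype.card α)
    (c : PartialEdgeColoring G α) {x y : V} (hxy : G.Adj x y) :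
    ∃ c' : PartialEdgeColoring G α, insert s(x, y) c.support ⊆ c'.support := by
  by_cases hc : c.color s(x, y) = none
  · exact IsFan.exists_insert_support_subset hdeg
      ⟨hxy, hc, List.nodup_singleton y, List.isChain_singleton y⟩
  · exact ⟨c, Set.insert_subset hc subset_rfl⟩

theorem exists_edgeSet_subset_support (hdeg : ∀ v, G.degree v < Fintype.card α) :
    ∃ c : PartialEdgeColoring G α, G.edgeSet ⊆ c.support := by
  classical
  suffices ∀ s : Finset (Sym2 V), ↑s ⊆ G.edgeSet →
      ∃ c : PartialEdgeColoring G α, ↑s ⊆ c.support by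
    simpa using this G.edgeFinset (by simp)
  intro s
  induction s using Finset.induction_on with
  | empty => exact fun _ => ⟨⟨fun _ => none, nofun, nofun⟩, by simp⟩
  | insert e s _ ih =>
    rw [Finset.coe_insert, Set.insert_subset_iff]
    rintro ⟨he, hs⟩
    obtain ⟨c, hc⟩ := ih hs
    induction e using Sym2.ind with
    | _ x y =>
      obtain ⟨c', hc'⟩ := exists_insert_support_subset hdeg c he
      exact ⟨c', (Set.insert_subset_insert hc).trans hc'⟩

end PartialEdgeColoring

theorem nonempty_lineGraph_coloring [Fintype V] [DecidableRel G.Adj] [Fintype α]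
    (hdeg : ∀ v, G.degree v < Fintype.card α) : Nonempty (G.lineGraph.Coloring α) := by
  classical
  obtain ⟨c, hc⟩ := PartialEdgeColoring.exists_edgeSet_subset_support hdeg
  have hsome (e : G.edgeSet) : (c.color e).isSome := Option.isSome_iff_ne_none.2 (hc e.2)
  refine ⟨Coloring.mk (fun e => (c.color e).get (hsome e)) fun {e f} hef heq => ?_⟩
  obtain ⟨hne, v, hve, hvf⟩ := lineGraph_adj_iff_exists.1 hef
  obtain ⟨u, hu⟩ := Sym2.mem_iff_exists.1 hve
  obtain ⟨w, hw⟩ := Sym2.mem_iff_exists.1 hvf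
  have hcol : c.color e = c.color f :=
    (Option.some_get _).symm.trans ((congrArg some heq).trans (Option.some_get _))
  obtain ⟨γ, hγ⟩ := Option.isSome_iff_exists.1 (hsome e)
  have hγ' := hcol ▸ hγ
  rw [hu] at hγ
  rw [hw] at hγ'
  exact hne (Subtype.ext (by rw [hu, hw, c.eq_of_color_eq_some hγ hγ']))

theorem lineGraph_colorable [Fintype V] [DecidableRel G.Adj] :
    G.lineGraph.Colorable (G.maxDegree + 1) :=
  nonempty_lineGraph_coloring fun v => by
    simpa using Nat.lt_succ_of_le (G.degree_le_maxDegree v)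

end SimpleGraph

theorem vizing_theorem
    {V : Type*} [Fintype V] (G : SimpleGraph V) [DecidableRel G.Adj] :
    ∃ C : G.edgeSet → Fin (G.maxDegree + 1),
      ∀ e f : G.edgeSet, e ≠ f →
        (∃ v : V, v ∈ (e : Sym2 V) ∧ v ∈ (f : Sym2 V)) → C e ≠ C f := by
  obtain ⟨C⟩ := G.lineGraph_colorable
  exact ⟨C, fun e f hne hv => C.valid (SimpleGraph.lineGraph_adj_iff_exists.2 ⟨hne, hv⟩)⟩
end
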